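/- arXiv:1210.5165 — 6 statements merged into one kernel-verified Lean document; each statement's English description precedes it below -/
import Mathlib

section
/- Let (u_k)_{k≥0} be a sequence of real numbers in [0,1], let n ≥ 1 be an integer and let j ∈ {0,…,n−1} be such that u_j ≠ 0. Then ∑_{k=j}^{n−1} u_k / (∑_{i=j}^{k} u_i) ≤ 1 + log n − log u_j. -/
open Real Finset

/-- For a sequence `u` with values in `[0,1]`, `n ≥ 1`, `j ≤ n-1` and
`u j ≠ 0`, one has `∑_{k=j}^{n-1} u k / (∑_{i=j}^{k} u i) ≤ 1 + log n - log (u j)`. -/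
theorem stmt_0 (u : ℕ → ℝ) (hu : ∀ k, u k ∈ Set.Icc (0 : ℝ) 1)
    (n : ℕ) (hn : 1 ≤ n) (j : ℕ) (hj : j ≤ n - 1) (huj : u j ≠ 0) :
    ∑ k ∈ Finset.Icc j (n - 1), u k / (∑ i ∈ Finset.Icc j k, u i)
      ≤ 1 + Real.log n - Real.log (u j) := by
  have hupos : ∀ k, 0 ≤ u k := fun k => (hu k).1
  have hule : ∀ k, u k ≤ 1 := fun k => (hu k).2
  set S : ℕ → ℝ := fun m => ∑ i ∈ Finset.Icc j m, u i with hS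
  have hujpos : 0 < u j := lt_of_le_of_ne (hupos j) (Ne.symm huj)
  have hSpos : ∀ m, j ≤ m → 0 < S m := by
    intro m hm
    apply Finset.sum_pos' (fun i _ => hupos i)
    exact ⟨j, Finset.mem_Icc.mpr ⟨le_refl j, hm⟩, hujpos⟩
  have key : ∀ m, j ≤ m → ∑ k ∈ Finset.Icc j m, u k / S k ≤ 1 + Real.log (S m) - Real.log (u j) := by
    intro m hm
    induction m, hm using Nat.le_induction with
    | base =>
      simp [hS, Finset.Icc_self, div_self huj]
    | succ m hm ih =>
      rw [Finset.sum_Icc_succ_top (by omega)]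
      have hSm := hSpos m hm
      have hSm1 : S (m+1) = S m + u (m+1) := by
        rw [hS]; simp [Finset.sum_Icc_succ_top (by omega : j ≤ m + 1)]
      have hSm1pos : 0 < S (m+1) := hSpos (m+1) (by omega)
      have hlog : Real.log (S m) - Real.log (S (m+1)) ≤ S m / S (m+1) - 1 := by
        have := Real.log_le_sub_one_of_pos (div_pos hSm hSm1pos)
        rwa [Real.log_div (ne_of_gt hSm) (ne_of_gt hSm1pos)] at this
      have h2 : u (m+1) / S (m+1) ≤ Real.log (S (m+1)) - Real.log (S m) := by
        have heq : u (m+1) / S (m+1) = 1 - S m / S (m+1) := by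
          field_simp
          linarith [hSm1]
        rw [heq]; linarith
      linarith [ih]
  have hfin := key (n-1) hj
  have hSle : S (n-1) ≤ n := by
    calc S (n-1) ≤ ∑ i ∈ Finset.Icc j (n-1), (1:ℝ) := Finset.sum_le_sum (fun i _ => hule i)
    _ = (Finset.Icc j (n-1)).card := by simp
    _ ≤ n := by
        rw [Nat.card_Icc]
        have : n - 1 + 1 - j ≤ n := by omega
        exact_mod_cast this
  have hlogn : Real.log (S (n-1)) ≤ Real.log n := by
    have := hSpos _ hj
    gcongr
  linarith
end

section
/- Let n, d, ℓ ∈ ℕ*, κ₀ > 0, b₁ > 0, and let (β_q)_{1≤q≤n} be nonnegative real numbers with β_q ≤ e^{−b₁ q} for all q ∈ {1,…,n}. Define R_n(ℓ) = n 2^{3ℓd} inf_{1 ≤ q ≤ n} { exp( −(κ₀/10) n/(q 2^{ℓd}) ) + n β_q / q }. Then R_n(ℓ) ≤ n² 2^{3ℓd+1} [ exp(−b₁ n) + exp( −(κ₀/10) n/2^{ℓd} ) + exp( −√( (κ₀ b₁ / 40) · n / 2^{ℓd} ) ) ]. -/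
open Real

set_option maxHeartbeats 800000

/-- Bound on `R_n(ℓ)` for geometrically β-mixing coefficients. -/
theorem stmt_8 (n d ℓ : ℕ) (hn : 1 ≤ n) (hd : 1 ≤ d) (hℓ : 1 ≤ ℓ)
    (κ₀ b₁ : ℝ) (hκ : 0 < κ₀) (hb : 0 < b₁)
    (β : ℕ → ℝ) (hβ0 : ∀ q, 1 ≤ q → q ≤ n → 0 ≤ β q)
    (hβ : ∀ q, 1 ≤ q → q ≤ n → β q ≤ Real.exp (-(b₁ * q))) :
    (n : ℝ) * 2 ^ (3 * ℓ * d) *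
      sInf {x : ℝ | ∃ q : ℕ, 1 ≤ q ∧ q ≤ n ∧
        x = Real.exp (-(κ₀ / 10) * ((n : ℝ) / (q * 2 ^ (ℓ * d)))) + (n : ℝ) * β q / q}
      ≤ (n : ℝ) ^ 2 * 2 ^ (3 * ℓ * d + 1) *
        (Real.exp (-(b₁ * n)) + Real.exp (-(κ₀ / 10) * ((n : ℝ) / 2 ^ (ℓ * d)))
          + Real.exp (-Real.sqrt (κ₀ * b₁ / 40 * ((n : ℝ) / 2 ^ (ℓ * d))))) := by
  have hn' : (1:ℝ) ≤ n := by exact_mod_cast hn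
  have hnpos : (0:ℝ) < n := by linarith
  set P : ℝ := 2 ^ (ℓ * d) with hPdef
  have hP : (0:ℝ) < P := by positivity
  set A : ℝ := κ₀ / 10 * ((n:ℝ) / P) with hAdef
  have hA : 0 < A := by positivity
  set s : ℝ := Real.sqrt (A / b₁) with hsdef
  have hs0 : 0 ≤ s := Real.sqrt_nonneg _
  have hs2 : s ^ 2 = A / b₁ := Real.sq_sqrt (by positivity)
  set t : ℝ := Real.sqrt (κ₀ * b₁ / 40 * ((n:ℝ) / P)) with htdef
  have ht0 : 0 ≤ t := Real.sqrt_nonneg _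
  have ht2 : t ^ 2 = A * b₁ / 4 := by
    rw [htdef, Real.sq_sqrt (by positivity)]; rw [hAdef]; ring
  set q : ℕ := min n (max 1 ⌈s⌉₊) with hqdef
  have hq1 : 1 ≤ q := le_min hn (le_max_left _ _)
  have hqn : q ≤ n := min_le_left _ _
  have hqpos : (0:ℝ) < q := by exact_mod_cast hq1
  -- bound (a)
  have ha : Real.exp (-(A / q)) ≤ Real.exp (-A) + Real.exp (-t) := by
    by_cases hs1 : s ≤ 1
    · have hceil : ⌈s⌉₊ ≤ 1 := Nat.ceil_le.2 (by exact_mod_cast hs1)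
      have hq' : q = 1 := by
        rw [hqdef]
        have : max 1 ⌈s⌉₊ = 1 := by omega
        rw [this]; omega
      rw [hq']
      simp only [Nat.cast_one, div_one]
      nlinarith [Real.exp_pos (-t)]
    · push_neg at hs1
      have hceil : (⌈s⌉₊ : ℝ) < s + 1 := Nat.ceil_lt_add_one hs0
      have hql : (q:ℝ) ≤ 2 * s := by
        have h1 : (1:ℕ) ≤ ⌈s⌉₊ := Nat.one_le_ceil_iff.2 (by linarith)
        have : q ≤ ⌈s⌉₊ := by
          rw [hqdef]; exact le_trans (min_le_right _ _) (by omega)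
        have : (q:ℝ) ≤ (⌈s⌉₊:ℝ) := by exact_mod_cast this
        linarith
      have htle : t ≤ A / q := by
        rw [le_div_iff₀ hqpos]
        have hts2 : (t * s) ^ 2 = A ^ 2 / 4 := by
          rw [mul_pow, ht2, hs2]; field_simp
        have h2ts : 2 * (t * s) ≤ A := by
          nlinarith [sq_nonneg (2 * (t * s) - A), hts2, hA]
        calc t * q ≤ t * (2 * s) := by nlinarith
          _ ≤ A := by linarith
      have : Real.exp (-(A / q)) ≤ Real.exp (-t) := by
        apply Real.exp_le_exp.2; linarith
      nlinarith [Real.exp_pos (-A)]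
  -- bound (b)
  have hb2 : (n:ℝ) * β q / q ≤ (n:ℝ) * Real.exp (-(b₁ * n)) + (n:ℝ) * Real.exp (-t) := by
    have hβq : β q ≤ Real.exp (-(b₁ * q)) := hβ q hq1 hqn
    have hβq0 : 0 ≤ β q := hβ0 q hq1 hqn
    have hstep : (n:ℝ) * β q / q ≤ (n:ℝ) * Real.exp (-(b₁ * q)) := by
      rw [div_le_iff₀ hqpos]
      have h1 : (1:ℝ) ≤ q := by exact_mod_cast hq1
      have he := Real.exp_pos (-(b₁ * (q:ℝ)))
      calc (n:ℝ) * β q ≤ (n:ℝ) * Real.exp (-(b₁ * q)) :=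
            mul_le_mul_of_nonneg_left hβq hnpos.le
        _ ≤ (n:ℝ) * Real.exp (-(b₁ * q)) * q := le_mul_of_one_le_right (by positivity) h1
    rcases le_or_gt n (max 1 ⌈s⌉₊) with h | h
    · have hq' : q = n := by rw [hqdef]; omega
      rw [hq'] at hstep ⊢
      have := Real.exp_pos (-t)
      nlinarith
    · have hq' : q = max 1 ⌈s⌉₊ := by rw [hqdef]; omega
      have hqs : s ≤ (q:ℝ) := by
        rw [hq']
        calc s ≤ (⌈s⌉₊:ℝ) := Nat.le_ceil s
          _ ≤ ((max 1 ⌈s⌉₊ :ℕ):ℝ) := by exact_mod_cast le_max_right 1 ⌈s⌉₊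
      have htle : t ≤ b₁ * q := by
        have hbq : 0 ≤ b₁ * (q:ℝ) := by positivity
        have hbs : b₁ ^ 2 * s ^ 2 = A * b₁ := by rw [hs2]; field_simp
        have hAb : κ₀ * b₁ / 40 * ((n:ℝ) / P) = A * b₁ / 4 := by rw [hAdef]; ring
        have harg : κ₀ * b₁ / 40 * ((n:ℝ) / P) ≤ (b₁ * (q:ℝ)) ^ 2 := by
          rw [hAb]
          nlinarith [hbs, mul_le_mul_of_nonneg_left (mul_self_le_mul_self hs0 hqs) (sq_nonneg b₁), hA, hb]
        calc t ≤ Real.sqrt ((b₁ * (q:ℝ)) ^ 2) := by rw [htdef]; exact Real.sqrt_le_sqrt harg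
          _ = b₁ * (q:ℝ) := Real.sqrt_sq hbq
      have : Real.exp (-(b₁ * q)) ≤ Real.exp (-t) := Real.exp_le_exp.2 (by linarith)
      have := Real.exp_pos (-(b₁ * (n:ℝ)))
      nlinarith
  -- sInf ≤ element
  have hmem : Real.exp (-(A / q)) + (n:ℝ) * β q / q ∈
      {x : ℝ | ∃ q : ℕ, 1 ≤ q ∧ q ≤ n ∧
        x = Real.exp (-(κ₀ / 10) * ((n : ℝ) / (q * 2 ^ (ℓ * d)))) + (n : ℝ) * β q / q} := by
    refine ⟨q, hq1, hqn, ?_⟩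
    have harg : -(κ₀ / 10) * ((n : ℝ) / (q * 2 ^ (ℓ * d))) = -(A / q) := by
      rw [hAdef, ← hPdef]
      field_simp
    rw [harg]
  have hbdd : BddBelow {x : ℝ | ∃ q : ℕ, 1 ≤ q ∧ q ≤ n ∧
      x = Real.exp (-(κ₀ / 10) * ((n : ℝ) / (q * 2 ^ (ℓ * d)))) + (n : ℝ) * β q / q} := by
    refine ⟨0, ?_⟩
    rintro x ⟨q', hq1', hqn', rfl⟩
    have h1 : (0:ℝ) < q' := by exact_mod_cast hq1'
    have := Real.exp_pos (-(κ₀ / 10) * ((n : ℝ) / (q' * 2 ^ (ℓ * d))))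
    have hβ' := hβ0 q' hq1' hqn'
    positivity
  have hinf : sInf {x : ℝ | ∃ q : ℕ, 1 ≤ q ∧ q ≤ n ∧
      x = Real.exp (-(κ₀ / 10) * ((n : ℝ) / (q * 2 ^ (ℓ * d)))) + (n : ℝ) * β q / q}
      ≤ Real.exp (-(A / q)) + (n:ℝ) * β q / q := csInf_le hbdd hmem
  -- final arithmetic
  have hC : (0:ℝ) < 2 ^ (3 * ℓ * d) := by positivity
  have hEA : Real.exp (-(κ₀ / 10) * ((n : ℝ) / 2 ^ (ℓ * d))) = Real.exp (-A) := by
    congr 1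
    rw [hAdef, ← hPdef]; ring
  have hEt : Real.exp (-Real.sqrt (κ₀ * b₁ / 40 * ((n : ℝ) / 2 ^ (ℓ * d)))) = Real.exp (-t) := by
    rw [htdef, ← hPdef]
  rw [hEA, hEt]
  have h2 : (2:ℝ) ^ (3 * ℓ * d + 1) = 2 * 2 ^ (3 * ℓ * d) := by rw [pow_succ]; ring
  rw [h2]
  have key : Real.exp (-(A / q)) + (n:ℝ) * β q / q
      ≤ 2 * (n:ℝ) * (Real.exp (-(b₁ * n)) + Real.exp (-A) + Real.exp (-t)) := by
    have e1 := Real.exp_pos (-(b₁ * (n:ℝ)))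
    have e2 := Real.exp_pos (-A)
    have e3 := Real.exp_pos (-t)
    nlinarith
  calc (n : ℝ) * 2 ^ (3 * ℓ * d) * sInf _
      ≤ (n:ℝ) * 2 ^ (3 * ℓ * d) * (Real.exp (-(A / q)) + (n:ℝ) * β q / q) := by
        apply mul_le_mul_of_nonneg_left hinf (by positivity)
    _ ≤ (n:ℝ) * 2 ^ (3 * ℓ * d) * (2 * (n:ℝ) * (Real.exp (-(b₁ * n)) + Real.exp (-A) + Real.exp (-t))) := by
        apply mul_le_mul_of_nonneg_left key (by positivity)
    _ = (n : ℝ) ^ 2 * (2 * 2 ^ (3 * ℓ * d)) * (Real.exp (-(b₁ * n)) + Real.exp (-A) + Real.exp (-t)) := by ring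
end

section
/- For all κ₀ > 0 and b₁ > 0 there exists a constant C > 0, depending only on κ₀ and b₁, such that for all integers n > 3, d, ℓ ∈ ℕ* with 2^{ℓd} ≤ n/(log n)³, and every sequence of nonnegative real numbers (β_q)_{1≤q≤n} with β_q ≤ e^{−b₁ q} for all q ∈ {1,…,n}, the quantity R_n(ℓ) = n 2^{3ℓd} inf_{1 ≤ q ≤ n} { exp( −(κ₀/10) n/(q 2^{ℓd}) ) + n β_q / q } satisfies R_n(ℓ) ≤ C. -/
open Real

set_option maxHeartbeats 1000000 in
/-- `R_n(ℓ)` is bounded by a constant depending only on `κ₀, b₁`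
for geometrically β-mixing coefficients, provided `2^{ℓd} ≤ n / (log n)³`. -/
theorem stmt_10 (κ₀ b₁ : ℝ) (hκ : 0 < κ₀) (hb : 0 < b₁) :
    ∃ C : ℝ, 0 < C ∧
      ∀ (n d ℓ : ℕ), 3 < n → 1 ≤ d → 1 ≤ ℓ →
      ((2 : ℝ) ^ (ℓ * d) ≤ (n : ℝ) / (Real.log n) ^ 3) →
      ∀ β : ℕ → ℝ, (∀ q, 1 ≤ q → q ≤ n → 0 ≤ β q) →
        (∀ q : ℕ, 1 ≤ q → q ≤ n → β q ≤ Real.exp (-(b₁ * q))) →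
      (n : ℝ) * 2 ^ (3 * ℓ * d) *
        sInf {x : ℝ | ∃ q : ℕ, 1 ≤ q ∧ q ≤ n ∧
          x = Real.exp (-(κ₀ / 10) * ((n : ℝ) / (q * 2 ^ (ℓ * d)))) + (n : ℝ) * β q / q}
        ≤ C := by
  have hK0 : (0:ℝ) < 5 / b₁ + 1 := by positivity
  set K : ℝ := 5 / b₁ + 1 with hKdef
  set a : ℝ := κ₀ / (10 * K) with hadef
  have ha : 0 < a := by positivity
  refine ⟨Real.exp (4 / a) + 1 + 2 * (10 / b₁ + 1) ^ 8, by positivity, ?_⟩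
  intro n d ℓ hn hd hℓ hpow β hβ0 hβ
  have hn4 : (4:ℝ) ≤ (n:ℝ) := by exact_mod_cast hn
  have hn0 : (0:ℝ) < n := by linarith
  set L : ℝ := Real.log n with hLdef
  have hL1 : (1:ℝ) ≤ L := by
    rw [hLdef, Real.le_log_iff_exp_le hn0]
    calc Real.exp 1 ≤ 2.7182818286 := (Real.exp_one_lt_d9).le
      _ ≤ (n:ℝ) := by linarith
  have hL0 : (0:ℝ) < L := by linarith
  have hP0 : (0:ℝ) < (2:ℝ)^(ℓ*d) := by positivity
  have hL3 : (1:ℝ) ≤ L^3 := by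
    calc (1:ℝ) = 1^3 := (one_pow 3).symm
      _ ≤ L^3 := pow_le_pow_left₀ (by norm_num) hL1 3
  -- prefactor bound
  have hexpL : Real.exp L = (n:ℝ) := Real.exp_log hn0
  have hpre : (n:ℝ) * 2 ^ (3*ℓ*d) ≤ Real.exp (4*L) := by
    have h1 : (2:ℝ)^(3*ℓ*d) = ((2:ℝ)^(ℓ*d))^3 := by
      rw [← pow_mul]; ring_nf
    have h2 : ((2:ℝ)^(ℓ*d))^3 ≤ ((n:ℝ)/L^3)^3 := by gcongr
    have h3 : ((n:ℝ)/L^3) ≤ (n:ℝ) := div_le_self hn0.le hL3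
    have h4 : ((n:ℝ)/L^3)^3 ≤ (n:ℝ)^3 := by
      apply pow_le_pow_left₀ (by positivity) h3
    have h5 : Real.exp (4*L) = (n:ℝ)^4 := by
      rw [show (4:ℝ)*L = L+L+L+L by ring, Real.exp_add, Real.exp_add, Real.exp_add, hexpL]
      ring
    rw [h1, h5]
    calc (n:ℝ) * ((2:ℝ)^(ℓ*d))^3 ≤ (n:ℝ) * (n:ℝ)^3 :=
          mul_le_mul_of_nonneg_left (h2.trans h4) hn0.le
      _ = (n:ℝ)^4 := by ring
  -- bddBelow
  have hSbdd : BddBelow {x : ℝ | ∃ q : ℕ, 1 ≤ q ∧ q ≤ n ∧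
      x = Real.exp (-(κ₀ / 10) * ((n : ℝ) / (q * 2 ^ (ℓ * d)))) + (n : ℝ) * β q / q} := by
    refine ⟨0, ?_⟩
    rintro x ⟨q, h1, h2, rfl⟩
    have hq0 : (0:ℝ) ≤ (q:ℝ) := by positivity
    have := hβ0 q h1 h2
    have h3 : (0:ℝ) ≤ (n:ℝ) * β q / q := by positivity
    positivity
  have key : ∀ q : ℕ, 1 ≤ q → q ≤ n →
      (n : ℝ) * 2 ^ (3 * ℓ * d) *
        sInf {x : ℝ | ∃ q : ℕ, 1 ≤ q ∧ q ≤ n ∧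
          x = Real.exp (-(κ₀ / 10) * ((n : ℝ) / (q * 2 ^ (ℓ * d)))) + (n : ℝ) * β q / q}
      ≤ (n : ℝ) * 2 ^ (3 * ℓ * d) *
        (Real.exp (-(κ₀ / 10) * ((n : ℝ) / (q * 2 ^ (ℓ * d)))) + (n : ℝ) * β q / q) := by
    intro q h1 h2
    exact mul_le_mul_of_nonneg_left (csInf_le hSbdd ⟨q, h1, h2, rfl⟩) (by positivity)
  set q₀ : ℕ := ⌈5 * L / b₁⌉₊ with hq₀def
  have hq₀1 : 1 ≤ q₀ := by
    rw [hq₀def]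
    exact Nat.one_le_iff_ne_zero.mpr (by
      have : 0 < ⌈5 * L / b₁⌉₊ := Nat.ceil_pos.mpr (by positivity)
      omega)
  have hq₀ge : 5 * L / b₁ ≤ (q₀:ℝ) := Nat.le_ceil _
  have hq₀le : (q₀:ℝ) ≤ 5 * L / b₁ + 1 := (Nat.ceil_lt_add_one (by positivity)).le
  have hCpos : (0:ℝ) ≤ 2 * (10 / b₁ + 1) ^ 8 := by positivity
  have hE1pos : (0:ℝ) < Real.exp (4 / a) + 1 := by positivity
  by_cases hcase : q₀ ≤ n
  · -- main case
    refine (key q₀ hq₀1 hcase).trans ?_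
    have hq₀R : (1:ℝ) ≤ (q₀:ℝ) := by exact_mod_cast hq₀1
    have hq₀KL : (q₀:ℝ) ≤ K * L := by
      have h5b : 5 * L / b₁ = 5 / b₁ * L := by ring
      have : 5 * L / b₁ + 1 ≤ K * L := by
        rw [hKdef, h5b]
        nlinarith [div_pos (by norm_num : (0:ℝ) < 5) hb]
      exact hq₀le.trans this
    have hE : Real.exp (-(κ₀/10) * ((n:ℝ)/(q₀*2^(ℓ*d)))) ≤ Real.exp (-(a*L^2)) := by
      apply Real.exp_le_exp.2
      have hqP : (q₀:ℝ) * 2^(ℓ*d) ≤ K * (n:ℝ) / L^2 := by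
        calc (q₀:ℝ) * 2^(ℓ*d) ≤ (K*L) * ((n:ℝ)/L^3) :=
              mul_le_mul hq₀KL hpow hP0.le (by positivity)
          _ = K * (n:ℝ) / L^2 := by field_simp
      have hqPpos : (0:ℝ) < (q₀:ℝ) * 2^(ℓ*d) := by positivity
      have hfrac : L^2/K ≤ (n:ℝ)/((q₀:ℝ)*2^(ℓ*d)) := by
        rw [div_le_div_iff₀ hK0 hqPpos]
        have h9 := (le_div_iff₀ (by positivity : (0:ℝ) < L^2)).mp hqP
        nlinarith [h9]
      have heq : a * L^2 = κ₀/10 * (L^2/K) := by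
        rw [hadef]; field_simp <;> ring
      have : a * L^2 ≤ κ₀/10 * ((n:ℝ)/((q₀:ℝ)*2^(ℓ*d))) := by
        rw [heq]
        exact mul_le_mul_of_nonneg_left hfrac (by positivity)
      linarith
    have hB : (n:ℝ) * β q₀ / q₀ ≤ Real.exp (-(4*L)) := by
      have h1 : β q₀ ≤ Real.exp (-(b₁*q₀)) := hβ q₀ hq₀1 hcase
      have h2 : Real.exp (-(b₁*(q₀:ℝ))) ≤ Real.exp (-(5*L)) := by
        apply Real.exp_le_exp.2
        have h3 : 5*L ≤ b₁*(q₀:ℝ) := by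
          rw [div_le_iff₀ hb] at hq₀ge
          linarith
        linarith
      have hq₀pos : (0:ℝ) < (q₀:ℝ) := by linarith
      calc (n:ℝ) * β q₀ / q₀ ≤ (n:ℝ) * Real.exp (-(5*L)) := by
            rw [div_le_iff₀ hq₀pos]
            have hnum : (n:ℝ)*β q₀ ≤ (n:ℝ)*Real.exp (-(5*L)) :=
              mul_le_mul_of_nonneg_left (h1.trans h2) hn0.le
            nlinarith [hnum, mul_nonneg (mul_nonneg hn0.le (Real.exp_pos (-(5*L))).le)
              (by linarith : (0:ℝ) ≤ (q₀:ℝ) - 1)]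
        _ = Real.exp L * Real.exp (-(5*L)) := by rw [hexpL]
        _ = Real.exp (-(4*L)) := by
            rw [← Real.exp_add]
            congr 1
            ring
    calc (n : ℝ) * 2 ^ (3 * ℓ * d) *
          (Real.exp (-(κ₀ / 10) * ((n : ℝ) / (q₀ * 2 ^ (ℓ * d)))) + (n : ℝ) * β q₀ / q₀)
        ≤ Real.exp (4*L) * (Real.exp (-(a*L^2)) + Real.exp (-(4*L))) := by
          have hb0 := hβ0 q₀ hq₀1 hcase
          have hx0 : (0:ℝ) ≤ Real.exp (-(κ₀ / 10) * ((n : ℝ) / (q₀ * 2 ^ (ℓ * d)))) +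
              (n : ℝ) * β q₀ / q₀ := by positivity
          exact mul_le_mul hpre (add_le_add hE hB) hx0 (Real.exp_pos _).le
      _ = Real.exp (4*L - a*L^2) + 1 := by
          rw [mul_add, ← Real.exp_add, ← Real.exp_add,
            show 4*L + -(4*L) = 0 by ring, Real.exp_zero,
            show 4*L + -(a*L^2) = 4*L - a*L^2 by ring]
      _ ≤ Real.exp (4/a) + 1 := by
          have hquad : 4*L - a*L^2 ≤ 4/a := by
            rw [le_div_iff₀ ha]
            nlinarith [sq_nonneg (a*L - 2)]
          linarith [Real.exp_le_exp.2 hquad]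
      _ ≤ Real.exp (4 / a) + 1 + 2 * (10 / b₁ + 1) ^ 8 := by linarith
  · -- small n case
    push_neg at hcase
    have hn1 : 1 ≤ n := by omega
    refine (key n hn1 le_rfl).trans ?_
    have hsq : Real.sqrt n * Real.sqrt n = (n:ℝ) := Real.mul_self_sqrt hn0.le
    have hs0 : 0 < Real.sqrt (n:ℝ) := Real.sqrt_pos.mpr hn0
    have hs1 : 1 ≤ Real.sqrt (n:ℝ) := by
      rw [show (1:ℝ) = Real.sqrt 1 by simp]
      exact Real.sqrt_le_sqrt (by linarith)
    have hlog : L ≤ 2 * Real.sqrt n := by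
      have h1 : Real.log (Real.sqrt n) = L / 2 := by
        rw [Real.log_sqrt hn0.le]
      have h2 : Real.log (Real.sqrt n) ≤ Real.sqrt n - 1 :=
        Real.log_le_sub_one_of_pos hs0
      rw [h1] at h2
      linarith
    have hnq : (n:ℝ) + 1 ≤ (q₀:ℝ) := by exact_mod_cast hcase
    have hnb : (n:ℝ) ≤ (10/b₁+1)^2 := by
      have h1 : (n:ℝ) ≤ 5*L/b₁ := by linarith
      have h2 : 5*L/b₁ ≤ 10*Real.sqrt n/b₁ :=
        (div_le_div_iff_of_pos_right hb).mpr (by linarith)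
      have h3 : Real.sqrt n * Real.sqrt n ≤ (10/b₁) * Real.sqrt n := by
        rw [hsq]
        calc (n:ℝ) ≤ 10*Real.sqrt n/b₁ := h1.trans h2
          _ = (10/b₁) * Real.sqrt n := by ring
      have h4 : Real.sqrt n ≤ 10/b₁ := by
        nlinarith [h3, hs0]
      nlinarith [div_pos (by norm_num : (0:ℝ) < 10) hb]
    have hE' : Real.exp (-(κ₀/10) * ((n:ℝ)/((n:ℝ)*2^(ℓ*d)))) ≤ 1 := by
      apply Real.exp_le_one_iff.mpr
      have : (0:ℝ) ≤ (κ₀/10) * ((n:ℝ)/((n:ℝ)*2^(ℓ*d))) := by positivity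
      linarith
    have hB' : (n:ℝ) * β n / n ≤ 1 := by
      have h1 : (n:ℝ) * β n / n = β n := by
        field_simp
      rw [h1]
      have h2 : β n ≤ Real.exp (-(b₁*n)) := hβ n hn1 le_rfl
      have h3 : Real.exp (-(b₁*(n:ℝ))) ≤ 1 := by
        apply Real.exp_le_one_iff.mpr
        have : (0:ℝ) ≤ b₁*(n:ℝ) := by positivity
        linarith
      linarith
    have hpre2 : (n:ℝ) * 2 ^ (3*ℓ*d) ≤ (10/b₁+1)^8 := by
      have h5 : Real.exp (4*L) = (n:ℝ)^4 := by
        rw [show (4:ℝ)*L = L+L+L+L by ring, Real.exp_add, Real.exp_add, Real.exp_add, hexpL]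
        ring
      have h6 : (n:ℝ)^4 ≤ ((10/b₁+1)^2)^4 := pow_le_pow_left₀ hn0.le hnb 4
      have h7 : ((10/b₁+1)^2)^4 = (10/b₁+1)^8 := by ring
      calc (n:ℝ) * 2 ^ (3*ℓ*d) ≤ Real.exp (4*L) := hpre
        _ = (n:ℝ)^4 := h5
        _ ≤ (10/b₁+1)^8 := by rw [← h7]; exact h6
    calc (n : ℝ) * 2 ^ (3 * ℓ * d) *
          (Real.exp (-(κ₀ / 10) * ((n : ℝ) / (n * 2 ^ (ℓ * d)))) + (n : ℝ) * β n / n)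
        ≤ (10/b₁+1)^8 * 2 := by
          have hb0 := hβ0 n hn1 le_rfl
          exact mul_le_mul hpre2 (by linarith) (by positivity) (by positivity)
      _ ≤ Real.exp (4 / a) + 1 + 2 * (10 / b₁ + 1) ^ 8 := by linarith
end

section
/- For all σ, β ∈ (0,1] there exist a function φ : ℝ → ℝ that is σ-Hölder (with some finite constant) and a function g : [0,1] → ℝ that is β-Hölder (with some finite constant) such that the function f defined on [0,1]² by f(x,y) = φ(y − g(x)) satisfies: for all a, b ∈ (0,1], f belongs to the anisotropic Hölder space 𝓗^{(a,b)}([0,1]²) if and only if a ≤ βσ and b ≤ σ. -/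
open Real

/-- A real function `u` is `τ`-Hölder with constant `L` on a set `s`. -/
def IsHolderOn (τ L : ℝ) (u : ℝ → ℝ) (s : Set ℝ) : Prop :=
  ∀ t ∈ s, ∀ t' ∈ s, |u t - u t'| ≤ L * |t - t'| ^ τ

/-- `f` belongs to the anisotropic Hölder space `𝓗^{(a,b)}([0,1]²)`. -/
def MemAnisoHolder (a b : ℝ) (f : ℝ → ℝ → ℝ) : Prop :=
  ∃ L : ℝ, 0 ≤ L ∧
    (∀ y ∈ Set.Icc (0 : ℝ) 1, IsHolderOn a L (fun x => f x y) (Set.Icc 0 1)) ∧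
    (∀ x ∈ Set.Icc (0 : ℝ) 1, IsHolderOn b L (fun y => f x y) (Set.Icc 0 1))

/-!
The example is `φ t = |t| ^ σ` and `g x = x ^ β`. Composing Hölder maps multiplies exponents, so
`x ↦ φ (y - g x)` is `βσ`-Hölder and `y ↦ φ (y - g x)` is `σ`-Hölder, and on `[0,1]` a Hölder
exponent can always be lowered. Conversely, along the axes through the origin `f` equals
`x ^ (βσ)` and `y ^ σ`, and `t ^ p ≤ L * t ^ q` near `0` forces `q ≤ p`.
-/

open Set

namespace Real

theorem abs_rpow_sub_rpow_le {p : ℝ} (hp0 : 0 ≤ p) (hp1 : p ≤ 1) {u v : ℝ} (hu : 0 ≤ u)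
    (hv : 0 ≤ v) : |u ^ p - v ^ p| ≤ |u - v| ^ p := by
  wlog hvu : v ≤ u generalizing u v
  · rw [abs_sub_comm, abs_sub_comm u v]
    exact this hv hu (le_of_not_ge hvu)
  have hsub : u ^ p ≤ (u - v) ^ p + v ^ p := by
    simpa using rpow_add_le_add_rpow (sub_nonneg.2 hvu) hv hp0 hp1
  rw [abs_of_nonneg (sub_nonneg.2 (rpow_le_rpow hv hvu hp0)), abs_of_nonneg (sub_nonneg.2 hvu)]
  linarith

theorem abs_abs_rpow_sub_abs_rpow_le {p : ℝ} (hp0 : 0 ≤ p) (hp1 : p ≤ 1) (u v : ℝ) :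
    |(|u|) ^ p - (|v|) ^ p| ≤ |u - v| ^ p :=
  (abs_rpow_sub_rpow_le hp0 hp1 (abs_nonneg u) (abs_nonneg v)).trans
    (rpow_le_rpow (abs_nonneg _) (abs_abs_sub_abs_le_abs_sub u v) hp0)

theorem le_of_rpow_le_mul_rpow {p q L : ℝ} (h : ∀ t ∈ Ioc (0 : ℝ) 1, t ^ p ≤ L * t ^ q) :
    q ≤ p := by
  by_contra! hpq
  obtain ⟨t, hLt, ht⟩ :=
    (((tendsto_rpow_neg_nhdsGT_zero (sub_neg.2 hpq)).eventually_gt_atTop L).and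
      (Ioc_mem_nhdsGT one_pos)).exists
  rw [rpow_sub ht.1, lt_div_iff₀ (rpow_pos_of_pos ht.1 q)] at hLt
  linarith [h t ht]

end Real

namespace IsHolderOn

variable {τ L : ℝ} {u : ℝ → ℝ} {s : Set ℝ}

theorem mono (h : IsHolderOn τ L u s) {t : Set ℝ} (hts : t ⊆ s) : IsHolderOn τ L u t :=
  fun x hx x' hx' => h x (hts hx) x' (hts hx')

theorem const_sub (h : IsHolderOn τ L u s) (c : ℝ) : IsHolderOn τ L (fun t => c - u t) s :=
  fun t ht t' ht' => by simpa [sub_sub_sub_cancel_left, abs_sub_comm] using h t ht t' ht'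

theorem comp {σ M : ℝ} {φ : ℝ → ℝ} {t : Set ℝ} (hφ : IsHolderOn σ M φ t) (hu : IsHolderOn τ L u s)
    (hst : MapsTo u s t) (hM : 0 ≤ M) (hσ : 0 ≤ σ) (hL : 0 ≤ L) :
    IsHolderOn (τ * σ) (M * L ^ σ) (fun x => φ (u x)) s := fun x hx x' hx' =>
  calc |φ (u x) - φ (u x')| ≤ M * |u x - u x'| ^ σ := hφ _ (hst hx) _ (hst hx')
    _ ≤ M * (L * |x - x'| ^ τ) ^ σ := by gcongr; exact hu x hx x' hx'
    _ = M * L ^ σ * |x - x'| ^ (τ * σ) := by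
      rw [mul_rpow hL (by positivity), ← rpow_mul (abs_nonneg _), mul_assoc]

theorem mono_exponent (h : IsHolderOn τ L u s) (hs : ∀ t ∈ s, ∀ t' ∈ s, |t - t'| ≤ 1)
    (hL : 0 ≤ L) {τ' : ℝ} (hτ' : 0 ≤ τ') (hτ'τ : τ' ≤ τ) : IsHolderOn τ' L u s :=
  fun t ht t' ht' => (h t ht t' ht').trans <| mul_le_mul_of_nonneg_left
    (rpow_le_rpow_of_exponent_ge' (abs_nonneg _) (hs t ht t' ht') hτ' hτ'τ) hL

theorem exponent_le (h : IsHolderOn τ L u (Icc 0 1)) {p : ℝ}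
    (hu : ∀ t ∈ Icc (0 : ℝ) 1, |u t - u 0| = t ^ p) : τ ≤ p :=
  le_of_rpow_le_mul_rpow fun t ht => by
    simpa [hu t (Ioc_subset_Icc_self ht), abs_of_pos ht.1] using
      h t (Ioc_subset_Icc_self ht) 0 (left_mem_Icc.2 zero_le_one)

end IsHolderOn

theorem isHolderOn_abs_rpow {p : ℝ} (hp0 : 0 ≤ p) (hp1 : p ≤ 1) (s : Set ℝ) :
    IsHolderOn p 1 (fun t => |t| ^ p) s :=
  fun t _ t' _ => by simpa using abs_abs_rpow_sub_abs_rpow_le hp0 hp1 t t'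

theorem isHolderOn_rpow {p : ℝ} (hp0 : 0 ≤ p) (hp1 : p ≤ 1) :
    IsHolderOn p 1 (fun t => t ^ p) (Ici 0) :=
  fun t ht t' ht' => by simpa using abs_rpow_sub_rpow_le hp0 hp1 ht ht'

theorem isHolderOn_sub_const (c : ℝ) (s : Set ℝ) : IsHolderOn 1 1 (fun t => t - c) s :=
  fun t _ t' _ => by simp

/-- For all `σ, β ∈ (0,1]` there exist a `σ`-Hölder function `φ` on `ℝ`
and a `β`-Hölder function `g` on `[0,1]` such that `f(x,y) = φ(y - g x)` belongs to
`𝓗^{(a,b)}([0,1]²)` if and only if `a ≤ βσ` and `b ≤ σ`. -/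
theorem stmt_17 (σ β : ℝ) (hσ : σ ∈ Set.Ioc (0 : ℝ) 1) (hβ : β ∈ Set.Ioc (0 : ℝ) 1) :
    ∃ φ g : ℝ → ℝ,
      (∃ Lφ : ℝ, 0 ≤ Lφ ∧ ∀ u v : ℝ, |φ u - φ v| ≤ Lφ * |u - v| ^ σ) ∧
      (∃ Lg : ℝ, 0 ≤ Lg ∧ IsHolderOn β Lg g (Set.Icc 0 1)) ∧
      (∀ a ∈ Set.Ioc (0 : ℝ) 1, ∀ b ∈ Set.Ioc (0 : ℝ) 1,
        (MemAnisoHolder a b (fun x y => φ (y - g x)) ↔ (a ≤ β * σ ∧ b ≤ σ))) := by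
  obtain ⟨hσ0, hσ1⟩ := hσ
  obtain ⟨hβ0, hβ1⟩ := hβ
  have hφ := isHolderOn_abs_rpow hσ0.le hσ1 univ
  have hg : IsHolderOn β 1 (fun x => x ^ β) (Icc 0 1) :=
    (isHolderOn_rpow hβ0.le hβ1).mono Icc_subset_Ici_self
  refine ⟨fun t => |t| ^ σ, fun x => x ^ β, ⟨1, zero_le_one, fun u v => hφ u trivial v trivial⟩,
    ⟨1, zero_le_one, hg⟩, fun a ha b hb => ⟨?_, ?_⟩⟩
  · rintro ⟨L, -, hx, hy⟩
    have h0 : (0 : ℝ) ∈ Icc (0 : ℝ) 1 := left_mem_Icc.2 zero_le_one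
    refine ⟨(hx 0 h0).exponent_le fun x hx => ?_, (hy 0 h0).exponent_le fun y hy => ?_⟩
    · have hxβ : 0 ≤ x ^ β := rpow_nonneg hx.1 β
      simp [zero_rpow hβ0.ne', zero_rpow hσ0.ne', abs_of_nonneg hxβ,
        abs_of_nonneg (rpow_nonneg hxβ σ), rpow_mul hx.1]
    · simp [zero_rpow hβ0.ne', zero_rpow hσ0.ne', abs_of_nonneg hy.1,
        abs_of_nonneg (rpow_nonneg hy.1 σ)]
  · rintro ⟨haβσ, hbσ⟩
    have hdiam : ∀ t ∈ Icc (0 : ℝ) 1, ∀ t' ∈ Icc (0 : ℝ) 1, |t - t'| ≤ 1 :=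
      fun _ ht _ ht' => abs_sub_le_of_nonneg_of_le ht.1 ht.2 ht'.1 ht'.2
    refine ⟨1, zero_le_one, fun y _ => ?_, fun x _ => ?_⟩
    · have hrow := hφ.comp (hg.const_sub y) (mapsTo_univ _ _) zero_le_one hσ0.le zero_le_one
      rw [one_rpow, one_mul] at hrow
      exact hrow.mono_exponent hdiam zero_le_one ha.1.le haβσ
    · have hcol := hφ.comp (isHolderOn_sub_const (x ^ β) (Icc 0 1)) (mapsTo_univ _ _)
        zero_le_one hσ0.le zero_le_one
      rw [one_rpow, one_mul, one_mul] at hcol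
      exact hcol.mono_exponent hdiam zero_le_one hb.1.le hbσ
end

section
/- Let σ, β₁, β₂ ∈ (0,1] and set θ = min( β₂/2, σβ₁, σβ₂ ). Let φ : ℝ → ℝ be σ-Hölder (with some finite constant), let v₁ : [0,1] → ℝ be β₁-Hölder and v₂ : [0,1] → ℝ be β₂-Hölder (each with some finite constant). Then the function f defined on [0,1]² by f(x,y) = √|v₂(x)| · φ( v₂(x) (y − v₁(x)) ) belongs to the anisotropic Hölder space 𝓗^{(θ, σ)}([0,1]²), i.e. there exists L ≥ 0 such that for every y ∈ [0,1] the map x ↦ f(x,y) is θ-Hölder on [0,1] with constant L and for every x ∈ [0,1] the map y ↦ f(x,y) is σ-Hölder on [0,1] with constant L. -/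
open Real

/-- Subadditivity of `sqrt`: `√(u+v) ≤ √u + √v`. -/
lemma aux_sqrt_add (u v : ℝ) (hu : 0 ≤ u) (hv : 0 ≤ v) :
    Real.sqrt (u + v) ≤ Real.sqrt u + Real.sqrt v := by
  have h1 : u + v ≤ (Real.sqrt u + Real.sqrt v) ^ 2 := by
    have := Real.sq_sqrt hu
    have := Real.sq_sqrt hv
    have := Real.sqrt_nonneg u
    have := Real.sqrt_nonneg v
    nlinarith [mul_nonneg (Real.sqrt_nonneg u) (Real.sqrt_nonneg v)]
  calc Real.sqrt (u + v) ≤ Real.sqrt ((Real.sqrt u + Real.sqrt v) ^ 2) :=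
        Real.sqrt_le_sqrt h1
    _ = Real.sqrt u + Real.sqrt v :=
        Real.sqrt_sq (by positivity)

/-- `|√u - √v| ≤ √|u - v|` for nonneg `u v`. -/
lemma aux_sqrt_diff (u v : ℝ) (hu : 0 ≤ u) (hv : 0 ≤ v) :
    |Real.sqrt u - Real.sqrt v| ≤ Real.sqrt |u - v| := by
  wlog h : v ≤ u generalizing u v
  · rw [abs_sub_comm, abs_sub_comm u v]
    exact this v u hv hu (le_of_not_ge h)
  have h1 : Real.sqrt u ≤ Real.sqrt v + Real.sqrt (u - v) := by
    have := aux_sqrt_add v (u - v) hv (by linarith)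
    simpa using this
  have h2 : 0 ≤ Real.sqrt u - Real.sqrt v := by
    have := Real.sqrt_le_sqrt h
    linarith
  rw [abs_of_nonneg h2, abs_of_nonneg (by linarith : (0:ℝ) ≤ u - v)]
  linarith

/-- Real version of rpow subadditivity for exponents in `(0,1]`. -/
lemma aux_rpow_add (a b p : ℝ) (ha : 0 ≤ a) (hb : 0 ≤ b) (hp : 0 ≤ p) (hp1 : p ≤ 1) :
    (a + b) ^ p ≤ a ^ p + b ^ p := by
  lift a to NNReal using ha
  lift b to NNReal using hb
  have := NNReal.rpow_add_le_add_rpow a b hp hp1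
  exact_mod_cast this

/-- Monotone in exponent for base in `[0,1]`. -/
lemma aux_rpow_exp (t e θ : ℝ) (ht0 : 0 ≤ t) (ht1 : t ≤ 1) (hθ : 0 < θ) (h : θ ≤ e) :
    t ^ e ≤ t ^ θ := by
  rcases eq_or_lt_of_le ht0 with h0 | h0
  · rw [← h0, Real.zero_rpow (by linarith), Real.zero_rpow (ne_of_gt hθ)]
  · exact Real.rpow_le_rpow_of_exponent_ge h0 ht1 h

set_option maxHeartbeats 1000000 in
/-- If `φ` is `σ`-Hölder on `ℝ`, `v₁` is `β₁`-Hölder and `v₂` is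
`β₂`-Hölder on `[0,1]` (`σ, β₁, β₂ ∈ (0,1]`), then
`f(x,y) = √|v₂ x| ⬝ φ(v₂ x (y - v₁ x))` belongs to the anisotropic Hölder space
`𝓗^{(θ,σ)}([0,1]²)` with `θ = min(β₂/2, σβ₁, σβ₂)`. -/
theorem stmt_18 (σ β₁ β₂ : ℝ)
    (hσ : σ ∈ Set.Ioc (0 : ℝ) 1) (hβ₁ : β₁ ∈ Set.Ioc (0 : ℝ) 1) (hβ₂ : β₂ ∈ Set.Ioc (0 : ℝ) 1)
    (φ : ℝ → ℝ) (Lφ : ℝ) (hLφ : 0 ≤ Lφ)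
    (hφ : ∀ u v : ℝ, |φ u - φ v| ≤ Lφ * |u - v| ^ σ)
    (v₁ : ℝ → ℝ) (L₁ : ℝ) (hL₁ : 0 ≤ L₁) (hv₁ : IsHolderOn β₁ L₁ v₁ (Set.Icc 0 1))
    (v₂ : ℝ → ℝ) (L₂ : ℝ) (hL₂ : 0 ≤ L₂) (hv₂ : IsHolderOn β₂ L₂ v₂ (Set.Icc 0 1))
    (f : ℝ → ℝ → ℝ)
    (hf : ∀ x ∈ Set.Icc (0 : ℝ) 1, ∀ y ∈ Set.Icc (0 : ℝ) 1,
      f x y = Real.sqrt |v₂ x| * φ (v₂ x * (y - v₁ x)))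
    (θ : ℝ) (hθ : θ = min (β₂ / 2) (min (σ * β₁) (σ * β₂))) :
    ∃ L : ℝ, 0 ≤ L ∧
      (∀ y ∈ Set.Icc (0 : ℝ) 1, IsHolderOn θ L (fun x => f x y) (Set.Icc 0 1)) ∧
      (∀ x ∈ Set.Icc (0 : ℝ) 1, IsHolderOn σ L (fun y => f x y) (Set.Icc 0 1)) := by
  obtain ⟨hσ0, hσ1⟩ := hσ
  obtain ⟨hβ₁0, hβ₁1⟩ := hβ₁
  obtain ⟨hβ₂0, hβ₂1⟩ := hβ₂
  -- bounds on v₁, v₂ on [0,1]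
  set M₁ : ℝ := |v₁ 0| + L₁ with hM₁
  set M₂ : ℝ := |v₂ 0| + L₂ with hM₂
  have h01 : (0:ℝ) ∈ Set.Icc (0:ℝ) 1 := by constructor <;> norm_num
  have hb1 : ∀ x ∈ Set.Icc (0:ℝ) 1, |v₁ x| ≤ M₁ := by
    intro x hx
    have h := hv₁ x hx 0 h01
    have hxx : |x - 0| ^ β₁ ≤ 1 := by
      rw [sub_zero, abs_of_nonneg hx.1]
      exact Real.rpow_le_one hx.1 hx.2 (le_of_lt hβ₁0)
    have h2 : L₁ * |x - 0| ^ β₁ ≤ L₁ := by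
      nlinarith [mul_le_mul_of_nonneg_left hxx hL₁]
    have h3 := abs_sub_abs_le_abs_sub (v₁ x) (v₁ 0)
    rw [hM₁]; linarith
  have hb2 : ∀ x ∈ Set.Icc (0:ℝ) 1, |v₂ x| ≤ M₂ := by
    intro x hx
    have h := hv₂ x hx 0 h01
    have hxx : |x - 0| ^ β₂ ≤ 1 := by
      rw [sub_zero, abs_of_nonneg hx.1]
      exact Real.rpow_le_one hx.1 hx.2 (le_of_lt hβ₂0)
    have h2 : L₂ * |x - 0| ^ β₂ ≤ L₂ := by
      nlinarith [mul_le_mul_of_nonneg_left hxx hL₂]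
    have h3 := abs_sub_abs_le_abs_sub (v₂ x) (v₂ 0)
    rw [hM₂]; linarith
  have hM₁0 : 0 ≤ M₁ := by rw [hM₁]; positivity
  have hM₂0 : 0 ≤ M₂ := by rw [hM₂]; positivity
  -- bound on the argument of φ
  have harg : ∀ x ∈ Set.Icc (0:ℝ) 1, ∀ y ∈ Set.Icc (0:ℝ) 1,
      |v₂ x * (y - v₁ x)| ≤ M₂ * (1 + M₁) := by
    intro x hx y hy
    rw [abs_mul]
    have h1 : |y - v₁ x| ≤ 1 + M₁ := by
      have := abs_sub (y) (v₁ x)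
      have hy1 : |y| ≤ 1 := abs_le.2 ⟨by linarith [hy.1], hy.2⟩
      have := hb1 x hx
      calc |y - v₁ x| ≤ |y| + |v₁ x| := abs_sub _ _
        _ ≤ 1 + M₁ := by linarith
    exact mul_le_mul (hb2 x hx) h1 (abs_nonneg _) hM₂0
  -- bound on φ values
  set C : ℝ := |φ 0| + Lφ * (M₂ * (1 + M₁)) ^ σ with hC
  have hC0 : 0 ≤ C := by
    have : (0:ℝ) ≤ (M₂ * (1 + M₁)) ^ σ := Real.rpow_nonneg (by positivity) _
    rw [hC]; positivity
  have hφb : ∀ x ∈ Set.Icc (0:ℝ) 1, ∀ y ∈ Set.Icc (0:ℝ) 1,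
      |φ (v₂ x * (y - v₁ x))| ≤ C := by
    intro x hx y hy
    have h1 := hφ (v₂ x * (y - v₁ x)) 0
    rw [sub_zero] at h1
    have h2 : |v₂ x * (y - v₁ x)| ^ σ ≤ (M₂ * (1 + M₁)) ^ σ :=
      Real.rpow_le_rpow (abs_nonneg _) (harg x hx y hy) (le_of_lt hσ0)
    have := abs_sub_abs_le_abs_sub (φ (v₂ x * (y - v₁ x))) (φ 0)
    rw [hC]
    nlinarith
  -- the final constant
  set L : ℝ := Real.sqrt L₂ * C +
      Real.sqrt M₂ * Lφ * ((L₂ * (1 + M₁)) ^ σ + (M₂ * L₁) ^ σ + M₂ ^ σ) with hL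
  have hterm : (0:ℝ) ≤ (L₂ * (1 + M₁)) ^ σ + (M₂ * L₁) ^ σ + M₂ ^ σ := by
    have := Real.rpow_nonneg (show (0:ℝ) ≤ L₂ * (1 + M₁) by positivity) σ
    have := Real.rpow_nonneg (show (0:ℝ) ≤ M₂ * L₁ by positivity) σ
    have := Real.rpow_nonneg hM₂0 σ
    linarith
  have hL0 : 0 ≤ L := by
    rw [hL]
    have := Real.sqrt_nonneg L₂
    have := Real.sqrt_nonneg M₂
    positivity
  have hθ0 : 0 < θ := by
    rw [hθ]
    simp only [lt_min_iff]
    refine ⟨by linarith, by positivity, by positivity⟩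
  refine ⟨L, hL0, ?_, ?_⟩
  · -- x-direction, exponent θ
    intro y hy x hx x' hx'
    simp only
    rw [hf x hx y hy, hf x' hx' y hy]
    set a := v₂ x
    set a' := v₂ x'
    set b := v₁ x
    set b' := v₁ x'
    set t := |x - x'| with ht
    have ht0 : 0 ≤ t := abs_nonneg _
    have ht1 : t ≤ 1 := by
      rw [ht, abs_sub_le_iff]
      constructor <;> linarith [hx.1, hx.2, hx'.1, hx'.2]
    have htθ : 0 ≤ t ^ θ := Real.rpow_nonneg ht0 θ
    -- key split
    have hsplit : Real.sqrt |a| * φ (a * (y - b)) - Real.sqrt |a'| * φ (a' * (y - b')) =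
        (Real.sqrt |a| - Real.sqrt |a'|) * φ (a * (y - b)) +
        Real.sqrt |a'| * (φ (a * (y - b)) - φ (a' * (y - b'))) := by ring
    rw [hsplit]
    -- bound term 1
    have hβhalf : Real.sqrt (t ^ β₂) = t ^ (β₂ / 2) := by
      rw [Real.sqrt_eq_rpow, ← Real.rpow_mul ht0]
      ring_nf
    have hT1 : |(Real.sqrt |a| - Real.sqrt |a'|) * φ (a * (y - b))| ≤
        Real.sqrt L₂ * C * t ^ (β₂ / 2) := by
      rw [abs_mul]
      have h1 : abs (Real.sqrt |a| - Real.sqrt |a'|) ≤ Real.sqrt (L₂ * t ^ β₂) := by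
        have hd := aux_sqrt_diff |a| |a'| (abs_nonneg _) (abs_nonneg _)
        have h2 : abs (|a| - |a'|) ≤ L₂ * t ^ β₂ := by
          have := abs_abs_sub_abs_le_abs_sub a a'
          exact le_trans this (hv₂ x hx x' hx')
        exact le_trans hd (Real.sqrt_le_sqrt h2)
      have h3 : Real.sqrt (L₂ * t ^ β₂) = Real.sqrt L₂ * t ^ (β₂ / 2) := by
        rw [Real.sqrt_mul hL₂, hβhalf]
      rw [h3] at h1
      have h4 := hφb x hx y hy
      have hs : 0 ≤ Real.sqrt L₂ * t ^ (β₂ / 2) := by positivity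
      calc abs (Real.sqrt |a| - Real.sqrt |a'|) * |φ (a * (y - b))|
          ≤ (Real.sqrt L₂ * t ^ (β₂ / 2)) * C :=
            mul_le_mul h1 h4 (abs_nonneg _) hs
        _ = Real.sqrt L₂ * C * t ^ (β₂ / 2) := by ring
    -- bound term 2
    have hT2 : |Real.sqrt |a'| * (φ (a * (y - b)) - φ (a' * (y - b')))| ≤
        Real.sqrt M₂ * Lφ *
          ((L₂ * (1 + M₁)) ^ σ * t ^ (σ * β₂) + (M₂ * L₁) ^ σ * t ^ (σ * β₁)) := by
      rw [abs_mul, abs_of_nonneg (Real.sqrt_nonneg _)]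
      have hsa : Real.sqrt |a'| ≤ Real.sqrt M₂ := Real.sqrt_le_sqrt (hb2 x' hx')
      have hPQ : |a * (y - b) - a' * (y - b')| ≤
          L₂ * (1 + M₁) * t ^ β₂ + M₂ * L₁ * t ^ β₁ := by
        have hkey : a * (y - b) - a' * (y - b') = (a - a') * (y - b) + a' * (b' - b) := by
          ring
        rw [hkey]
        have h1 : |(a - a') * (y - b)| ≤ L₂ * (1 + M₁) * t ^ β₂ := by
          rw [abs_mul, show L₂ * (1 + M₁) * t ^ β₂ = (L₂ * t ^ β₂) * (1 + M₁) by ring]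
          have hyb : |y - b| ≤ 1 + M₁ := by
            have hy1 : |y| ≤ 1 := abs_le.2 ⟨by linarith [hy.1], hy.2⟩
            have := hb1 x hx
            calc |y - b| ≤ |y| + |b| := abs_sub _ _
              _ ≤ 1 + M₁ := by linarith
          exact mul_le_mul (hv₂ x hx x' hx') hyb (abs_nonneg _) (by positivity)
        have h2 : |a' * (b' - b)| ≤ M₂ * L₁ * t ^ β₁ := by
          rw [abs_mul, show M₂ * L₁ * t ^ β₁ = M₂ * (L₁ * t ^ β₁) by ring]
          have hbb : |b' - b| ≤ L₁ * t ^ β₁ := by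
            have := hv₁ x' hx' x hx
            rwa [show |x' - x| = t by rw [ht, abs_sub_comm]] at this
          exact mul_le_mul (hb2 x' hx') hbb (abs_nonneg _) hM₂0

        calc |(a - a') * (y - b) + a' * (b' - b)| ≤
            |(a - a') * (y - b)| + |a' * (b' - b)| := abs_add_le _ _
          _ ≤ L₂ * (1 + M₁) * t ^ β₂ + M₂ * L₁ * t ^ β₁ := by linarith
      have hφd := hφ (a * (y - b)) (a' * (y - b'))
      have hmono : |a * (y - b) - a' * (y - b')| ^ σ ≤
          (L₂ * (1 + M₁) * t ^ β₂ + M₂ * L₁ * t ^ β₁) ^ σ :=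
        Real.rpow_le_rpow (abs_nonneg _) hPQ (le_of_lt hσ0)
      have hsub : (L₂ * (1 + M₁) * t ^ β₂ + M₂ * L₁ * t ^ β₁) ^ σ ≤
          (L₂ * (1 + M₁)) ^ σ * t ^ (σ * β₂) + (M₂ * L₁) ^ σ * t ^ (σ * β₁) := by
        have h1 := aux_rpow_add (L₂ * (1 + M₁) * t ^ β₂) (M₂ * L₁ * t ^ β₁) σ
          (by positivity) (by positivity) (le_of_lt hσ0) hσ1
        have h2 : (L₂ * (1 + M₁) * t ^ β₂) ^ σ = (L₂ * (1 + M₁)) ^ σ * t ^ (σ * β₂) := by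
          rw [Real.mul_rpow (by positivity) (Real.rpow_nonneg ht0 _), ← Real.rpow_mul ht0]
          ring_nf
        have h3 : (M₂ * L₁ * t ^ β₁) ^ σ = (M₂ * L₁) ^ σ * t ^ (σ * β₁) := by
          rw [Real.mul_rpow (by positivity) (Real.rpow_nonneg ht0 _), ← Real.rpow_mul ht0]
          ring_nf
        rw [h2, h3] at h1
        exact h1
      have hφ2 : |φ (a * (y - b)) - φ (a' * (y - b'))| ≤
          Lφ * ((L₂ * (1 + M₁)) ^ σ * t ^ (σ * β₂) + (M₂ * L₁) ^ σ * t ^ (σ * β₁)) := by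
        calc |φ (a * (y - b)) - φ (a' * (y - b'))| ≤
            Lφ * |a * (y - b) - a' * (y - b')| ^ σ := hφd
          _ ≤ Lφ * ((L₂ * (1 + M₁)) ^ σ * t ^ (σ * β₂) + (M₂ * L₁) ^ σ * t ^ (σ * β₁)) := by
            exact mul_le_mul_of_nonneg_left (le_trans hmono hsub) hLφ
      calc Real.sqrt |a'| * |φ (a * (y - b)) - φ (a' * (y - b'))| ≤
          Real.sqrt M₂ * (Lφ * ((L₂ * (1 + M₁)) ^ σ * t ^ (σ * β₂) +
            (M₂ * L₁) ^ σ * t ^ (σ * β₁))) := by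
            apply mul_le_mul hsa hφ2 (abs_nonneg _) (Real.sqrt_nonneg _)
        _ = Real.sqrt M₂ * Lφ *
            ((L₂ * (1 + M₁)) ^ σ * t ^ (σ * β₂) + (M₂ * L₁) ^ σ * t ^ (σ * β₁)) := by ring
    -- exponent reductions
    have he1 : t ^ (β₂ / 2) ≤ t ^ θ :=
      aux_rpow_exp t (β₂ / 2) θ ht0 ht1 hθ0 (by rw [hθ]; exact min_le_left _ _)
    have he2 : t ^ (σ * β₁) ≤ t ^ θ :=
      aux_rpow_exp t (σ * β₁) θ ht0 ht1 hθ0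
        (by rw [hθ]; exact le_trans (min_le_right _ _) (min_le_left _ _))
    have he3 : t ^ (σ * β₂) ≤ t ^ θ :=
      aux_rpow_exp t (σ * β₂) θ ht0 ht1 hθ0
        (by rw [hθ]; exact le_trans (min_le_right _ _) (min_le_right _ _))
    have habs := abs_add_le ((Real.sqrt |a| - Real.sqrt |a'|) * φ (a * (y - b)))
      (Real.sqrt |a'| * (φ (a * (y - b)) - φ (a' * (y - b'))))
    have hnn1 : (0:ℝ) ≤ Real.sqrt L₂ * C := by positivity
    have hnn2 : (0:ℝ) ≤ Real.sqrt M₂ * Lφ := by positivity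
    have hnn3 : (0:ℝ) ≤ (L₂ * (1 + M₁)) ^ σ :=
      Real.rpow_nonneg (by positivity) _
    have hnn4 : (0:ℝ) ≤ (M₂ * L₁) ^ σ := Real.rpow_nonneg (by positivity) _
    have hnn5 : (0:ℝ) ≤ M₂ ^ σ := Real.rpow_nonneg hM₂0 _
    rw [hL]
    have hstep := le_trans habs (add_le_add hT1 hT2)
    clear_value a a' b b' t C L M₁ M₂
    linarith [mul_le_mul_of_nonneg_left he1 hnn1,
      mul_le_mul_of_nonneg_left he2 (mul_nonneg hnn2 hnn4),
      mul_le_mul_of_nonneg_left he3 (mul_nonneg hnn2 hnn3),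
      mul_nonneg (mul_nonneg hnn2 hnn5) htθ]
  · -- y-direction, exponent σ
    intro x hx y hy y' hy'
    simp only
    rw [hf x hx y hy, hf x hx y' hy']
    rw [← mul_sub, abs_mul, abs_of_nonneg (Real.sqrt_nonneg _)]
    have hsa : Real.sqrt |v₂ x| ≤ Real.sqrt M₂ := Real.sqrt_le_sqrt (hb2 x hx)
    have hφd := hφ (v₂ x * (y - v₁ x)) (v₂ x * (y' - v₁ x))
    have hkey : v₂ x * (y - v₁ x) - v₂ x * (y' - v₁ x) = v₂ x * (y - y') := by ring
    rw [hkey, abs_mul] at hφd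
    have h1 : (|v₂ x| * |y - y'|) ^ σ ≤ M₂ ^ σ * |y - y'| ^ σ := by
      rw [Real.mul_rpow (abs_nonneg _) (abs_nonneg _)]
      exact mul_le_mul_of_nonneg_right
        (Real.rpow_le_rpow (abs_nonneg _) (hb2 x hx) (le_of_lt hσ0))
        (Real.rpow_nonneg (abs_nonneg _) _)
    have h2 : |φ (v₂ x * (y - v₁ x)) - φ (v₂ x * (y' - v₁ x))| ≤
        Lφ * (M₂ ^ σ * |y - y'| ^ σ) :=
      le_trans hφd (mul_le_mul_of_nonneg_left h1 hLφ)
    have h3 : Real.sqrt |v₂ x| * |φ (v₂ x * (y - v₁ x)) - φ (v₂ x * (y' - v₁ x))| ≤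
        Real.sqrt M₂ * (Lφ * (M₂ ^ σ * |y - y'| ^ σ)) :=
      mul_le_mul hsa h2 (abs_nonneg _) (Real.sqrt_nonneg _)
    have hyσ : (0:ℝ) ≤ |y - y'| ^ σ := Real.rpow_nonneg (abs_nonneg _) _
    have hnn3 : (0:ℝ) ≤ (L₂ * (1 + M₁)) ^ σ := Real.rpow_nonneg (by positivity) _
    have hnn4 : (0:ℝ) ≤ (M₂ * L₁) ^ σ := Real.rpow_nonneg (by positivity) _
    have hnn1 : (0:ℝ) ≤ Real.sqrt L₂ * C := by positivity
    have hnn2 : (0:ℝ) ≤ Real.sqrt M₂ * Lφ := by positivity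
    rw [hL]
    linarith [mul_nonneg hnn1 hyσ, mul_nonneg (mul_nonneg hnn2 hnn3) hyσ,
      mul_nonneg (mul_nonneg hnn2 hnn4) hyσ]
end

section
/- Assume that for all i ∈ {0,…,n−1}, X_i admits a density φ_i with respect to Lebesgue measure on ℝ^d with φ_i(x) ≤ κ for all x ∈ [0,1]^d. Then for every ℓ ∈ ℕ* such that 2^{ℓd} ≥ n, inf_{m ∈ 𝓜_ℓ} { d₂²(√s|_A, V_m) + |m| (log n)/n } ≤ 4 · inf_{m ∈ 𝓜_∞} { d₂²(√s|_A, V_m) + |m| (log n)/n }. -/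
open MeasureTheory Real
open scoped ENNReal
noncomputable section
open Classical

/-- Dyadic subinterval of `[0,1]`: `[l/2^j, (l+1)/2^j)`, closed on the right when
`l + 1 = 2^j`. -/
def dyadicI (j l : ℕ) : Set ℝ :=
  if l + 1 = 2 ^ j then Set.Icc ((l : ℝ) / 2 ^ j) 1
  else Set.Ico ((l : ℝ) / 2 ^ j) (((l : ℝ) + 1) / 2 ^ j)

/-- A dyadic cube of `[0,1]^{2d}` is coded by its level and its multi-index. -/
abbrev CubeIdx (d : ℕ) := ℕ × (Fin (2 * d) → ℕ)

/-- The subset of `[0,1]^{2d}` coded by a cube index. -/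
def cubeSet (d : ℕ) (K : CubeIdx d) : Set (Fin (2 * d) → ℝ) :=
  {x | ∀ i, x i ∈ dyadicI K.1 (K.2 i)}

/-- The `4^d` dyadic children (of half side length) of a dyadic cube. -/
def childrenC (d : ℕ) (K : CubeIdx d) : Finset (CubeIdx d) :=
  (Finset.univ : Finset (Fin (2 * d) → Fin 2)).image
    (fun ε => (K.1 + 1, fun i => 2 * K.2 i + (ε i : ℕ)))

/-- `IsPartOf d ℓ K m` means: `m` is a partition of the dyadic cube `K` into dyadic
cubes, obtained by at most `ℓ` recursive splitting steps (at each step, each current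
cube may be split into its `4^d` children). -/
inductive IsPartOf (d : ℕ) : ℕ → CubeIdx d → Finset (CubeIdx d) → Prop
  | leaf (ℓ : ℕ) (K : CubeIdx d) : IsPartOf d ℓ K {K}
  | node (ℓ : ℕ) (K : CubeIdx d) (f : CubeIdx d → Finset (CubeIdx d))
      (h : ∀ K' ∈ childrenC d K, IsPartOf d ℓ K' (f K')) :
      IsPartOf d (ℓ + 1) K ((childrenC d K).biUnion f)

/-- The root cube, coding `[0,1]^{2d}`. -/
def rootC (d : ℕ) : CubeIdx d := (0, fun _ => 0)

/-- The collection `𝓜_ℓ` of dyadic partitions of `[0,1]^{2d}` built in at most `ℓ` steps. -/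
def Mpart (d ℓ : ℕ) : Set (Finset (CubeIdx d)) := {m | IsPartOf d ℓ (rootC d) m}

/-- The collection `𝓜_∞ = ⋃_ℓ 𝓜_ℓ`. -/
def MpartInf (d : ℕ) : Set (Finset (CubeIdx d)) := ⋃ ℓ, Mpart d ℓ

/-- The collection `𝓜_ℓ` for `ℓ ∈ ℕ ∪ {∞}`. -/
def MpartE (d : ℕ) (ℓ : ℕ∞) : Set (Finset (CubeIdx d)) :=
  if ℓ = ⊤ then MpartInf d else Mpart d ℓ.toNat

/-- Concatenation of two points of `ℝ^d` into a point of `ℝ^{2d}`. -/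
def pairPt (d : ℕ) (x y : Fin d → ℝ) : Fin (2 * d) → ℝ :=
  fun i => if h : (i : ℕ) < d then x ⟨i, h⟩
    else y ⟨(i : ℕ) - d, by have := i.isLt; omega⟩

/-- The indicator function `1_K` of a dyadic cube, as a function on `ℝ^d × ℝ^d`. -/
def indC (d : ℕ) (K : CubeIdx d) (p : (Fin d → ℝ) × (Fin d → ℝ)) : ℝ :=
  (cubeSet d K).indicator (fun _ => (1 : ℝ)) (pairPt d p.1 p.2)

/-- The set `A = [0,1]^d × [0,1]^d` on which the transition density is estimated. -/
def unitSq (d : ℕ) : Set ((Fin d → ℝ) × (Fin d → ℝ)) :=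
  (Set.Icc (0 : Fin d → ℝ) 1) ×ˢ (Set.Icc (0 : Fin d → ℝ) 1)

/-- The empirical Hellinger-type squared distance
`H²(f,f') = (1/(2n)) ∑_{i<n} ∫ (√f(X_i,y) - √f'(X_i,y))² dy`. -/
def hellSq (d : ℕ) {Ω : Type*} (n : ℕ) (X : ℕ → Ω → (Fin d → ℝ)) (ω : Ω)
    (f g : (Fin d → ℝ) × (Fin d → ℝ) → ℝ) : ℝ :=
  (1 / (2 * n)) * ∑ i ∈ Finset.range n,
    ∫ y, (Real.sqrt (f (X i ω, y)) - Real.sqrt (g (X i ω, y))) ^ 2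

/-- The test statistic `T(f,f')` (conventions `0/0 = 0` are those of real division). -/
def Tstat (d : ℕ) {Ω : Type*} (n : ℕ) (X : ℕ → Ω → (Fin d → ℝ)) (ω : Ω)
    (f g : (Fin d → ℝ) × (Fin d → ℝ) → ℝ) : ℝ :=
  (1 / (2 * Real.sqrt 2 * n)) * (∑ i ∈ Finset.range n,
      ∫ y, Real.sqrt (f (X i ω, y) + g (X i ω, y)) *
        (Real.sqrt (g (X i ω, y)) - Real.sqrt (f (X i ω, y))))
  + (1 / (Real.sqrt 2 * n)) * (∑ i ∈ Finset.range n,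
      (Real.sqrt (g (X i ω, X (i + 1) ω)) - Real.sqrt (f (X i ω, X (i + 1) ω))) /
        Real.sqrt (f (X i ω, X (i + 1) ω) + g (X i ω, X (i + 1) ω)))
  + (1 / (2 * n)) * (∑ i ∈ Finset.range n,
      ∫ y, (f (X i ω, y) - g (X i ω, y)))

/-- The histogram estimator `ŝ_m` on a dyadic partition `m` (convention `0/0 = 0`). -/
def histEst (d : ℕ) {Ω : Type*} (n : ℕ) (X : ℕ → Ω → (Fin d → ℝ))
    (m : Finset (CubeIdx d)) (ω : Ω) : (Fin d → ℝ) × (Fin d → ℝ) → ℝ :=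
  fun p => ∑ K ∈ m,
    ((∑ i ∈ Finset.range n, indC d K (X i ω, X (i + 1) ω)) /
      (∑ i ∈ Finset.range n, ∫ y, indC d K (X i ω, y))) * indC d K p

/-- The set `V_m` of nonnegative piecewise constant functions on a dyadic partition `m`. -/
def VmD (d : ℕ) (m : Finset (CubeIdx d)) : Set ((Fin d → ℝ) × (Fin d → ℝ) → ℝ) :=
  {g | ∃ a : CubeIdx d → ℝ, (∀ K ∈ m, 0 ≤ a K) ∧
    g = fun p => ∑ K ∈ m, a K * indC d K p}

/-- `|m' ∨ K|`: the number of nonempty pieces `K' ∩ K`, `K' ∈ m'`. -/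
def veeCard (d : ℕ) (m' : Finset (CubeIdx d)) (K : CubeIdx d) : ℕ :=
  ((m'.filter fun K' => (cubeSet d K' ∩ cubeSet d K).Nonempty).image
    fun K' => cubeSet d K' ∩ cubeSet d K).card

/-- The penalty `L ⬝ c ⬝ log n / n` attached to a cardinality `c`. -/
def penC (L : ℝ) (n : ℕ) (c : ℕ) : ℝ := L * c * Real.log n / n

/-- `α = (1 - 1/√2)/2`. -/
def alphaC : ℝ := (1 - 1 / Real.sqrt 2) / 2

/-- Restriction `f ⬝ 1_{K ∩ K'}`. -/
def restr2 (d : ℕ) (f : (Fin d → ℝ) × (Fin d → ℝ) → ℝ) (K K' : CubeIdx d) :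
    (Fin d → ℝ) × (Fin d → ℝ) → ℝ :=
  fun p => f p * indC d K p * indC d K' p

/-- Restriction `f ⬝ 1_K`. -/
def restr1 (d : ℕ) (f : (Fin d → ℝ) × (Fin d → ℝ) → ℝ) (K : CubeIdx d) :
    (Fin d → ℝ) × (Fin d → ℝ) → ℝ :=
  fun p => f p * indC d K p

/-- The selection criterion `γ`. -/
def gammaSel (d : ℕ) {Ω : Type*} (n : ℕ) (X : ℕ → Ω → (Fin d → ℝ)) (L : ℝ) (ℓ : ℕ∞)
    (ω : Ω) (m : Finset (CubeIdx d)) : ℝ :=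
  (∑ K ∈ m, ⨆ m' : MpartE d ℓ,
      ((∑ K' ∈ (m' : Finset (CubeIdx d)),
          (alphaC * hellSq d n X ω (restr2 d (histEst d n X m ω) K K')
                (restr2 d (histEst d n X (m' : Finset (CubeIdx d)) ω) K K')
            + Tstat d n X ω (restr2 d (histEst d n X m ω) K K')
                (restr2 d (histEst d n X (m' : Finset (CubeIdx d)) ω) K K')))
        - penC L n (veeCard d (m' : Finset (CubeIdx d)) K)))
  + 2 * penC L n m.card

/-- `s ⬝ 1_A`, the target function restricted to `A = [0,1]^{2d}`. -/
def sIndA (d : ℕ) (s : (Fin d → ℝ) → (Fin d → ℝ) → ℝ) :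
    (Fin d → ℝ) × (Fin d → ℝ) → ℝ :=
  (unitSq d).indicator fun p => s p.1 p.2

end

noncomputable section
open Classical

/-- The squared `L²([0,1]^{2d})` distance between `√s` (restricted to `[0,1]^{2d}`) and a
function `g` on `ℝ^d × ℝ^d`. -/
def d2Sq (d : ℕ) (s : (Fin d → ℝ) → (Fin d → ℝ) → ℝ)
    (g : (Fin d → ℝ) × (Fin d → ℝ) → ℝ) : ℝ :=
  ∫ p in unitSq d, (Real.sqrt (s p.1 p.2) - g p) ^ 2

/-!
Cutting the splitting tree of a partition `m ∈ 𝓜_∞` at depth `ℓ` gives `m' ∈ 𝓜_ℓ` with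
`|m'| ≤ |m|`. An approximant `g ∈ V_m` is transported to `V_{m'}` by keeping its values on the
cubes common to `m` and `m'` and putting `0` on the new cubes, all of level `ℓ`. On such a cube `K`
this costs `∫_{K ∩ A} s ≤ 2^{-ℓd} ≤ 1/n ≤ log n / n`: since `∫ s(x, y) dy = 1`, the mass of `s`
on `K` is at most the volume of the projection of `K` on the first factor. Hence the criterion of
`m'` is at most twice that of `m`.
-/

open Set

lemma sInf_le_mul_sInf {ι : Type*} {f : ι → ℝ} {S T : Set ι} (hf : ∀ i ∈ S, 0 ≤ f i)
    (hT : T.Nonempty) {c : ℝ} (hc : 0 < c) (h : ∀ j ∈ T, ∃ i ∈ S, f i ≤ c * f j) :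
    sInf {x | ∃ i ∈ S, x = f i} ≤ c * sInf {x | ∃ j ∈ T, x = f j} := by
  rw [← div_le_iff₀' hc]
  obtain ⟨j₀, hj₀⟩ := hT
  refine le_csInf ⟨_, j₀, hj₀, rfl⟩ fun x ⟨j, hj, hx⟩ => ?_
  obtain ⟨i, hi, hle⟩ := h j hj
  rw [div_le_iff₀' hc, hx]
  have hbdd : BddBelow {x | ∃ i ∈ S, x = f i} := ⟨0, fun _ ⟨i, hi, hy⟩ => hy ▸ hf i hi⟩
  exact (csInf_le hbdd ⟨i, hi, rfl⟩).trans hle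

section Measure

variable {α β : Type*} [MeasurableSpace α] [MeasurableSpace β] {μ : Measure α} {ν : Measure β}
  [SFinite μ] [SFinite ν] {s : α → β → ℝ}

lemma setLIntegral_prod_univ_eq (hsm : Measurable (Function.uncurry s)) (hs0 : ∀ x y, 0 ≤ s x y)
    (hs1 : ∀ x, ∫ y, s x y ∂ν = 1) (T : Set α) :
    ∫⁻ p in T ×ˢ univ, ENNReal.ofReal (s p.1 p.2) ∂μ.prod ν = μ T := by
  have hmass : ∀ x, ∫⁻ y, ENNReal.ofReal (s x y) ∂ν = 1 := fun x => by
    rw [← ofReal_integral_eq_lintegral_ofReal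
      (Integrable.of_integral_ne_zero (by simp [hs1])) (.of_forall (hs0 x)), hs1,
      ENNReal.ofReal_one]
  rw [← Measure.restrict_prod_eq_prod_univ,
    lintegral_prod (fun p => ENNReal.ofReal (s p.1 p.2))
      (ENNReal.measurable_ofReal.comp hsm).aemeasurable]
  simp [hmass]

lemma integrableOn_prod_univ (hsm : Measurable (Function.uncurry s)) (hs0 : ∀ x y, 0 ≤ s x y)
    (hs1 : ∀ x, ∫ y, s x y ∂ν = 1) {T : Set α} (hT : μ T ≠ ⊤) :
    IntegrableOn (fun p => s p.1 p.2) (T ×ˢ univ) (μ.prod ν) := by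
  refine ⟨hsm.aestronglyMeasurable,
    (hasFiniteIntegral_iff_ofReal (.of_forall fun p => hs0 _ _)).2 ?_⟩
  rw [setLIntegral_prod_univ_eq hsm hs0 hs1]
  exact hT.lt_top

end Measure

lemma dyadicI_subset_Ici (j l : ℕ) : dyadicI j l ⊆ Ici ((l : ℝ) / 2 ^ j) := by
  unfold dyadicI; split
  exacts [Icc_subset_Ici_self, Ico_subset_Ici_self]

lemma measurableSet_dyadicI (j l : ℕ) : MeasurableSet (dyadicI j l) := by
  unfold dyadicI; split
  exacts [measurableSet_Icc, measurableSet_Ico]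

lemma volume_dyadicI (j l : ℕ) : volume (dyadicI j l) = ENNReal.ofReal (1 / 2 ^ j) := by
  unfold dyadicI; split
  · next h =>
    have hl : (l : ℝ) + 1 = 2 ^ j := by exact_mod_cast h
    rw [Real.volume_Icc]
    congr 1
    field_simp
    linarith
  · rw [Real.volume_Ico, div_sub_div_same, add_sub_cancel_left]

lemma two_mul_div_two_pow_succ (j l : ℕ) :
    ((2 * l : ℕ) : ℝ) / 2 ^ (j + 1) = (l : ℝ) / 2 ^ j := by
  push_cast; rw [pow_succ]; field_simp

lemma dyadicI_succ_two_mul (j l : ℕ) :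
    dyadicI (j + 1) (2 * l) = Ico ((l : ℝ) / 2 ^ j) (((2 * l + 1 : ℕ) : ℝ) / 2 ^ (j + 1)) := by
  have hodd : 2 * l + 1 ≠ 2 ^ (j + 1) := by rw [pow_succ]; omega
  rw [dyadicI, if_neg hodd, two_mul_div_two_pow_succ]
  push_cast; rfl

lemma dyadicI_succ_union (j l : ℕ) :
    dyadicI (j + 1) (2 * l) ∪ dyadicI (j + 1) (2 * l + 1) = dyadicI j l := by
  have hmid : (l : ℝ) / 2 ^ j ≤ ((2 * l + 1 : ℕ) : ℝ) / 2 ^ (j + 1) := by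
    rw [← two_mul_div_two_pow_succ]; gcongr; exact_mod_cast Nat.le_succ _
  rw [dyadicI_succ_two_mul, dyadicI, dyadicI]
  by_cases h : l + 1 = 2 ^ j
  · have h' : 2 * l + 1 + 1 = 2 ^ (j + 1) := by rw [pow_succ]; omega
    rw [if_pos h', if_pos h]
    refine Ico_union_Icc_eq_Icc hmid ?_
    rw [div_le_one (by positivity)]
    exact_mod_cast (by omega : 2 * l + 1 ≤ 2 ^ (j + 1))
  · have h' : 2 * l + 1 + 1 ≠ 2 ^ (j + 1) := by rw [pow_succ]; omega
    have hright : (((2 * l + 1 : ℕ) : ℝ) + 1) / 2 ^ (j + 1) = ((l : ℝ) + 1) / 2 ^ j := by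
      push_cast; rw [pow_succ]; field_simp; ring
    rw [if_neg h', if_neg h, hright]
    refine Ico_union_Ico_eq_Ico hmid ?_
    rw [← hright]; gcongr; linarith

lemma disjoint_dyadicI_succ (j l : ℕ) :
    Disjoint (dyadicI (j + 1) (2 * l)) (dyadicI (j + 1) (2 * l + 1)) := by
  rw [dyadicI_succ_two_mul]
  exact disjoint_of_subset Ico_subset_Iio_self (dyadicI_subset_Ici _ _)
    (Iio_disjoint_Ici le_rfl)

lemma div_two_pow_mem_dyadicI (j l : ℕ) : (l : ℝ) / 2 ^ j ∈ dyadicI j l := by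
  unfold dyadicI; split
  · next h =>
    refine ⟨le_rfl, ?_⟩
    rw [div_le_one (by positivity)]
    exact_mod_cast (by omega : l ≤ 2 ^ j)
  · exact ⟨le_rfl, by gcongr; linarith⟩

lemma dyadicI_succ_subset (j l : ℕ) (e : Fin 2) : dyadicI (j + 1) (2 * l + e) ⊆ dyadicI j l := by
  rw [← dyadicI_succ_union j l]
  fin_cases e
  exacts [subset_union_left, subset_union_right]

lemma disjoint_dyadicI_succ_of_ne (j l : ℕ) {e₁ e₂ : Fin 2} (h : e₁ ≠ e₂) :
    Disjoint (dyadicI (j + 1) (2 * l + e₁)) (dyadicI (j + 1) (2 * l + e₂)) := by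
  fin_cases e₁ <;> fin_cases e₂
  all_goals first
    | exact absurd rfl h
    | exact disjoint_dyadicI_succ j l
    | exact (disjoint_dyadicI_succ j l).symm

lemma exists_mem_dyadicI_succ {j l : ℕ} {x : ℝ} (hx : x ∈ dyadicI j l) :
    ∃ e : Fin 2, x ∈ dyadicI (j + 1) (2 * l + e) := by
  rw [← dyadicI_succ_union] at hx
  rcases hx with hx | hx
  exacts [⟨0, hx⟩, ⟨1, hx⟩]

section Cube

variable {d : ℕ}

lemma mem_childrenC {K C : CubeIdx d} :
    C ∈ childrenC d K ↔ ∃ ε : Fin (2 * d) → Fin 2, C = (K.1 + 1, fun i => 2 * K.2 i + ε i) := by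
  simp [childrenC, eq_comm]

lemma cubeSet_nonempty (K : CubeIdx d) : (cubeSet d K).Nonempty :=
  ⟨_, fun i => div_two_pow_mem_dyadicI K.1 (K.2 i)⟩

lemma cubeSet_subset_of_mem_childrenC {K C : CubeIdx d} (h : C ∈ childrenC d K) :
    cubeSet d C ⊆ cubeSet d K := by
  obtain ⟨ε, rfl⟩ := mem_childrenC.1 h
  exact fun x hx i => dyadicI_succ_subset _ _ (ε i) (hx i)

lemma disjoint_cubeSet_of_mem_childrenC {K C₁ C₂ : CubeIdx d} (h₁ : C₁ ∈ childrenC d K)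
    (h₂ : C₂ ∈ childrenC d K) (hne : C₁ ≠ C₂) : Disjoint (cubeSet d C₁) (cubeSet d C₂) := by
  obtain ⟨ε₁, rfl⟩ := mem_childrenC.1 h₁
  obtain ⟨ε₂, rfl⟩ := mem_childrenC.1 h₂
  obtain ⟨i, hi⟩ : ∃ i, ε₁ i ≠ ε₂ i := by
    by_contra! h
    exact hne (by simp [funext h])
  exact Set.disjoint_left.2 fun x hx₁ hx₂ =>
    Set.disjoint_left.1 (disjoint_dyadicI_succ_of_ne K.1 (K.2 i) hi) (hx₁ i) (hx₂ i)

lemma exists_mem_childrenC_of_mem_cubeSet {K : CubeIdx d} {x : Fin (2 * d) → ℝ}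
    (hx : x ∈ cubeSet d K) : ∃ C ∈ childrenC d K, x ∈ cubeSet d C := by
  choose ε hε using fun i => exists_mem_dyadicI_succ (hx i)
  exact ⟨_, mem_childrenC.2 ⟨ε, rfl⟩, hε⟩

namespace IsPartOf

variable {ℓ : ℕ} {K : CubeIdx d} {m : Finset (CubeIdx d)}

lemma subset_cubeSet (h : IsPartOf d ℓ K m) : ∀ K' ∈ m, cubeSet d K' ⊆ cubeSet d K := by
  induction h with
  | leaf ℓ K => simp
  | node ℓ K f hf ih =>
    simp only [Finset.mem_biUnion, forall_exists_index, and_imp]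
    exact fun K' C hC hK' => (ih C hC K' hK').trans (cubeSet_subset_of_mem_childrenC hC)

lemma exists_mem_cubeSet (h : IsPartOf d ℓ K m) {x : Fin (2 * d) → ℝ}
    (hx : x ∈ cubeSet d K) : ∃ K' ∈ m, x ∈ cubeSet d K' := by
  induction h with
  | leaf ℓ K => exact ⟨K, Finset.mem_singleton_self K, hx⟩
  | node ℓ K f hf ih =>
    obtain ⟨C, hC, hxC⟩ := exists_mem_childrenC_of_mem_cubeSet hx
    obtain ⟨K', hK', hxK'⟩ := ih C hC hxC
    exact ⟨K', Finset.mem_biUnion.2 ⟨C, hC, hK'⟩, hxK'⟩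

lemma pairwiseDisjoint (h : IsPartOf d ℓ K m) :
    (m : Set (CubeIdx d)).PairwiseDisjoint (cubeSet d) := by
  induction h with
  | leaf ℓ K => simp
  | node ℓ K f hf ih =>
    rw [Finset.coe_biUnion]
    refine Set.PairwiseDisjoint.biUnion ?_ fun C hC => ih C hC
    intro C₁ hC₁ C₂ hC₂ hne
    exact (disjoint_cubeSet_of_mem_childrenC hC₁ hC₂ hne).mono
      (iSup₂_le fun K' hK' => (hf C₁ hC₁).subset_cubeSet K' hK')
      (iSup₂_le fun K' hK' => (hf C₂ hC₂).subset_cubeSet K' hK')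

lemma nonempty (h : IsPartOf d ℓ K m) : m.Nonempty := by
  induction h with
  | leaf ℓ K => exact Finset.singleton_nonempty K
  | node ℓ K f hf ih =>
    obtain ⟨C, hC⟩ : (childrenC d K).Nonempty := Finset.univ_nonempty.image _
    exact (ih C hC).mono (Finset.subset_biUnion_of_mem f hC)

lemma card_biUnion {f : CubeIdx d → Finset (CubeIdx d)}
    (hf : ∀ C ∈ childrenC d K, IsPartOf d ℓ C (f C)) :
    ((childrenC d K).biUnion f).card = ∑ C ∈ childrenC d K, (f C).card := by
  refine Finset.card_biUnion fun C₁ hC₁ C₂ hC₂ hne => Finset.disjoint_left.2 fun K' h₁ h₂ => ?_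
  obtain ⟨x, hx⟩ := cubeSet_nonempty K'
  exact Set.disjoint_left.1 (disjoint_cubeSet_of_mem_childrenC hC₁ hC₂ hne)
    ((hf C₁ hC₁).subset_cubeSet K' h₁ hx) ((hf C₂ hC₂).subset_cubeSet K' h₂ hx)

/-- Cut the splitting tree at depth `t`: each cube of `m` deeper than `t` is replaced by its
ancestor at depth `t`. -/
lemma exists_truncate (h : IsPartOf d ℓ K m) (t : ℕ) :
    ∃ m', IsPartOf d t K m' ∧ m'.card ≤ m.card ∧ ∀ K' ∈ m', K' ∈ m ∨ K'.1 = K.1 + t := by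
  induction h generalizing t with
  | leaf ℓ K => exact ⟨{K}, leaf t K, le_rfl, fun K' hK' => Or.inl hK'⟩
  | node ℓ K f hf ih =>
    cases t with
    | zero =>
      refine ⟨{K}, leaf 0 K, ?_, fun K' hK' => Or.inr (by simp_all)⟩
      simpa using (node ℓ K f hf).nonempty.card_pos
    | succ t =>
      choose! g hg hcard hmem using fun C hC => ih C hC t
      refine ⟨(childrenC d K).biUnion g, node t K g hg, ?_, ?_⟩
      · rw [card_biUnion hg, card_biUnion hf]
        exact Finset.sum_le_sum hcard
      · simp only [Finset.mem_biUnion, forall_exists_index, and_imp]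
        intro K' C hC hK'
        obtain ⟨ε, rfl⟩ := mem_childrenC.1 hC
        rcases hmem _ hC K' hK' with h | h
        · exact Or.inl ⟨_, hC, h⟩
        · exact Or.inr (by rw [h]; ring)

end IsPartOf

lemma measurableSet_cubeSet (K : CubeIdx d) : MeasurableSet (cubeSet d K) := by
  have : cubeSet d K = univ.pi fun i => dyadicI K.1 (K.2 i) := by ext; simp [cubeSet]
  rw [this]
  exact .univ_pi fun i => measurableSet_dyadicI _ _

lemma volume_pi_dyadicI (j : ℕ) (c : Fin d → ℕ) :
    volume (univ.pi fun i => dyadicI j (c i)) = ENNReal.ofReal (1 / 2 ^ (j * d)) := by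
  rw [volume_pi_pi]
  simp only [volume_dyadicI, Finset.prod_const, Finset.card_univ, Fintype.card_fin]
  rw [← ENNReal.ofReal_pow (by positivity), div_pow, one_pow, ← pow_mul]

lemma measurable_pairPt : Measurable fun p : (Fin d → ℝ) × (Fin d → ℝ) => pairPt d p.1 p.2 := by
  refine measurable_pi_lambda _ fun i => ?_
  unfold pairPt
  split
  exacts [(measurable_pi_apply _).comp measurable_fst, (measurable_pi_apply _).comp measurable_snd]

lemma fst_mem_pi_of_pairPt_mem_cubeSet {K : CubeIdx d} {x y : Fin d → ℝ}
    (h : pairPt d x y ∈ cubeSet d K) :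
    x ∈ univ.pi fun i : Fin d => dyadicI K.1 (K.2 (Fin.castLE (by omega) i)) := by
  intro i _
  have := h (Fin.castLE (by omega) i)
  unfold pairPt at this
  split at this
  · exact this
  · exact absurd i.isLt ‹_›

lemma pairPt_mem_cubeSet_rootC {p : (Fin d → ℝ) × (Fin d → ℝ)} (hp : p ∈ unitSq d) :
    pairPt d p.1 p.2 ∈ cubeSet d (rootC d) := by
  obtain ⟨⟨hx0, hx1⟩, ⟨hy0, hy1⟩⟩ := hp
  intro i
  simp only [rootC, dyadicI, pow_zero, zero_add, if_true, CharP.cast_eq_zero, zero_div]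
  unfold pairPt
  split
  exacts [⟨hx0 _, hx1 _⟩, ⟨hy0 _, hy1 _⟩]

lemma measurable_indC (K : CubeIdx d) : Measurable (indC d K) :=
  (measurable_const.indicator (measurableSet_cubeSet K)).comp measurable_pairPt

lemma indC_nonneg (K : CubeIdx d) (p : (Fin d → ℝ) × (Fin d → ℝ)) : 0 ≤ indC d K p :=
  Set.indicator_nonneg (fun _ _ => zero_le_one) _

lemma indC_le_one (K : CubeIdx d) (p : (Fin d → ℝ) × (Fin d → ℝ)) : indC d K p ≤ 1 :=
  Set.indicator_le_self' (fun _ _ => zero_le_one) _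

lemma indC_of_mem {K : CubeIdx d} {p : (Fin d → ℝ) × (Fin d → ℝ)}
    (h : pairPt d p.1 p.2 ∈ cubeSet d K) : indC d K p = 1 :=
  Set.indicator_of_mem h _

lemma indC_of_notMem {K : CubeIdx d} {p : (Fin d → ℝ) × (Fin d → ℝ)}
    (h : pairPt d p.1 p.2 ∉ cubeSet d K) : indC d K p = 0 :=
  Set.indicator_of_notMem h _

end Cube

def stepFun (d : ℕ) (m : Finset (CubeIdx d)) (a : CubeIdx d → ℝ) :
    (Fin d → ℝ) × (Fin d → ℝ) → ℝ :=
  fun p => ∑ K ∈ m, a K * indC d K p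

section StepFun

variable {d : ℕ}

lemma measurable_stepFun (m : Finset (CubeIdx d)) (a : CubeIdx d → ℝ) :
    Measurable (stepFun d m a) :=
  Finset.measurable_sum m fun K _ => (measurable_indC K).const_mul (a K)

lemma abs_stepFun_le (m : Finset (CubeIdx d)) (a : CubeIdx d → ℝ)
    (p : (Fin d → ℝ) × (Fin d → ℝ)) : |stepFun d m a p| ≤ ∑ K ∈ m, |a K| := by
  refine (Finset.abs_sum_le_sum_abs _ _).trans (Finset.sum_le_sum fun K _ => ?_)
  rw [abs_mul, abs_of_nonneg (indC_nonneg K p)]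
  exact mul_le_of_le_one_right (abs_nonneg _) (indC_le_one K p)

lemma stepFun_eq_of_mem {m : Finset (CubeIdx d)}
    (hm : (m : Set (CubeIdx d)).PairwiseDisjoint (cubeSet d)) (a : CubeIdx d → ℝ)
    {K : CubeIdx d} (hK : K ∈ m) {p : (Fin d → ℝ) × (Fin d → ℝ)}
    (hp : pairPt d p.1 p.2 ∈ cubeSet d K) : stepFun d m a p = a K := by
  rw [stepFun, Finset.sum_eq_single_of_mem K hK, indC_of_mem hp, mul_one]
  intro K' hK' hne
  rw [indC_of_notMem fun hp' => Set.disjoint_left.1 (hm hK' hK hne) hp' hp, mul_zero]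

end StepFun

section Density

variable {d : ℕ} {s : (Fin d → ℝ) → (Fin d → ℝ) → ℝ}

lemma integrableOn_unitSq (hsm : Measurable (Function.uncurry s)) (hs0 : ∀ x y, 0 ≤ s x y)
    (hs1 : ∀ x, ∫ y, s x y = 1) : IntegrableOn (fun p => s p.1 p.2) (unitSq d) :=
  (integrableOn_prod_univ hsm hs0 hs1 (isCompact_Icc.measure_lt_top.ne)).mono_set
    (prod_mono_right (subset_univ _))

lemma integrableOn_mul_indC (hsm : Measurable (Function.uncurry s)) (hs0 : ∀ x y, 0 ≤ s x y)
    (hs1 : ∀ x, ∫ y, s x y = 1) (K : CubeIdx d) :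
    IntegrableOn (fun p => s p.1 p.2 * indC d K p) (unitSq d) := by
  refine (integrableOn_unitSq hsm hs0 hs1).mono' (hsm.mul (measurable_indC K)).aestronglyMeasurable
    (.of_forall fun p => ?_)
  rw [Real.norm_eq_abs, abs_of_nonneg (mul_nonneg (hs0 _ _) (indC_nonneg K p))]
  exact mul_le_of_le_one_right (hs0 _ _) (indC_le_one K p)

lemma integrableOn_sqrt_sub_sq (hsm : Measurable (Function.uncurry s)) (hs0 : ∀ x y, 0 ≤ s x y)
    (hs1 : ∀ x, ∫ y, s x y = 1) {g : (Fin d → ℝ) × (Fin d → ℝ) → ℝ} (hg : Measurable g)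
    {C : ℝ} (hgC : ∀ p, |g p| ≤ C) :
    IntegrableOn (fun p => (√(s p.1 p.2) - g p) ^ 2) (unitSq d) := by
  have hA : volume (unitSq d) ≠ ⊤ := (isCompact_Icc.prod isCompact_Icc).measure_lt_top.ne
  refine (((integrableOn_unitSq hsm hs0 hs1).const_mul 2).add
    (integrableOn_const (C := 2 * C ^ 2) hA)).mono'
    ((hsm.sqrt.sub hg).pow_const 2).aestronglyMeasurable (.of_forall fun p => ?_)
  have hsq : √(s p.1 p.2) ^ 2 = s p.1 p.2 := Real.sq_sqrt (hs0 _ _)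
  have hg2 : g p ^ 2 ≤ C ^ 2 := sq_le_sq' (abs_le.1 (hgC p)).1 (abs_le.1 (hgC p)).2
  rw [Real.norm_eq_abs, abs_of_nonneg (sq_nonneg _)]
  show _ ≤ 2 * s p.1 p.2 + 2 * C ^ 2
  nlinarith [sq_nonneg (√(s p.1 p.2) + g p)]

lemma setIntegral_mul_indC_le (hsm : Measurable (Function.uncurry s)) (hs0 : ∀ x y, 0 ≤ s x y)
    (hs1 : ∀ x, ∫ y, s x y = 1) (K : CubeIdx d) :
    ∫ p in unitSq d, s p.1 p.2 * indC d K p ≤ 1 / 2 ^ (K.1 * d) := by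
  set S := univ.pi fun i : Fin d => dyadicI K.1 (K.2 (Fin.castLE (by omega) i))
  have hS : MeasurableSet S := .univ_pi fun i => measurableSet_dyadicI _ _
  have hle : ∀ p, ENNReal.ofReal (s p.1 p.2 * indC d K p)
      ≤ (S ×ˢ univ).indicator (fun p => ENNReal.ofReal (s p.1 p.2)) p := by
    intro p
    by_cases hp : pairPt d p.1 p.2 ∈ cubeSet d K
    · rw [indC_of_mem hp, mul_one,
        indicator_of_mem (mk_mem_prod (fst_mem_pi_of_pairPt_mem_cubeSet hp) (mem_univ _))]
    · simp [indC_of_notMem hp]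
  rw [← ENNReal.ofReal_le_ofReal_iff (by positivity), ofReal_integral_eq_lintegral_ofReal
    (integrableOn_mul_indC hsm hs0 hs1 K)
    (.of_forall fun p => mul_nonneg (hs0 _ _) (indC_nonneg K p))]
  calc ∫⁻ p in unitSq d, ENNReal.ofReal (s p.1 p.2 * indC d K p)
      ≤ ∫⁻ p, (S ×ˢ univ).indicator (fun p => ENNReal.ofReal (s p.1 p.2)) p :=
        (setLIntegral_le_lintegral _ _).trans (lintegral_mono hle)
    _ = volume S := by
        rw [lintegral_indicator (hS.prod .univ)]
        exact setLIntegral_prod_univ_eq hsm hs0 hs1 S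
    _ = ENNReal.ofReal (1 / 2 ^ (K.1 * d)) := volume_pi_dyadicI _ _

end Density

section Approximation

variable {d ℓ : ℕ} {s : (Fin d → ℝ) → (Fin d → ℝ) → ℝ} {m m' : Finset (CubeIdx d)}

/-- Where `m'` has a cube outside `m` the new step function is `0`, so the error there is `s`. -/
lemma sqrt_sub_stepFun_sq_le (hm : (m : Set (CubeIdx d)).PairwiseDisjoint (cubeSet d))
    (hm' : IsPartOf d ℓ (rootC d) m') (a : CubeIdx d → ℝ) {p : (Fin d → ℝ) × (Fin d → ℝ)}
    (hp : p ∈ unitSq d) (hs : 0 ≤ s p.1 p.2) :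
    (√(s p.1 p.2) - stepFun d m' (fun K => if K ∈ m then a K else 0) p) ^ 2
      ≤ (√(s p.1 p.2) - stepFun d m a p) ^ 2 + ∑ K ∈ m' \ m, s p.1 p.2 * indC d K p := by
  obtain ⟨K, hKm', hpK⟩ := hm'.exists_mem_cubeSet (pairPt_mem_cubeSet_rootC hp)
  rw [stepFun_eq_of_mem hm'.pairwiseDisjoint _ hKm' hpK]
  have hrest : 0 ≤ ∑ K ∈ m' \ m, s p.1 p.2 * indC d K p :=
    Finset.sum_nonneg fun K _ => mul_nonneg hs (indC_nonneg K p)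
  by_cases hKm : K ∈ m
  · rw [if_pos hKm, stepFun_eq_of_mem hm a hKm hpK]
    exact le_add_of_nonneg_right hrest
  · have hsK : s p.1 p.2 ≤ ∑ K ∈ m' \ m, s p.1 p.2 * indC d K p := by
      calc s p.1 p.2 = s p.1 p.2 * indC d K p := by rw [indC_of_mem hpK, mul_one]
        _ ≤ _ := Finset.single_le_sum (fun K _ => mul_nonneg hs (indC_nonneg K p))
          (Finset.mem_sdiff.2 ⟨hKm', hKm⟩)
    rw [if_neg hKm, sub_zero, Real.sq_sqrt hs]
    linarith [sq_nonneg (√(s p.1 p.2) - stepFun d m a p)]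

lemma d2Sq_stepFun_le (hsm : Measurable (Function.uncurry s)) (hs0 : ∀ x y, 0 ≤ s x y)
    (hs1 : ∀ x, ∫ y, s x y = 1) (hm : (m : Set (CubeIdx d)).PairwiseDisjoint (cubeSet d))
    (hm' : IsPartOf d ℓ (rootC d) m') (a : CubeIdx d → ℝ) :
    d2Sq d s (stepFun d m' fun K => if K ∈ m then a K else 0)
      ≤ d2Sq d s (stepFun d m a) + ∑ K ∈ m' \ m, ∫ p in unitSq d, s p.1 p.2 * indC d K p := by
  have hint : ∀ (m : Finset (CubeIdx d)) (a : CubeIdx d → ℝ),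
      IntegrableOn (fun p => (√(s p.1 p.2) - stepFun d m a p) ^ 2) (unitSq d) :=
    fun m a => integrableOn_sqrt_sub_sq hsm hs0 hs1 (measurable_stepFun m a) (abs_stepFun_le m a)
  have hrest : ∀ K ∈ m' \ m, IntegrableOn (fun p => s p.1 p.2 * indC d K p) (unitSq d) :=
    fun K _ => integrableOn_mul_indC hsm hs0 hs1 K
  unfold d2Sq
  rw [← integral_finsetSum _ hrest, ← integral_add (hint m a) (integrable_finsetSum _ hrest)]
  exact setIntegral_mono_on (hint _ _) ((hint m a).add (integrable_finsetSum _ hrest))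
    (measurableSet_Icc.prod measurableSet_Icc)
    fun p hp => by simpa using sqrt_sub_stepFun_sq_le hm hm' a hp (hs0 p.1 p.2)

end Approximation

def approxErr (d : ℕ) (s : (Fin d → ℝ) → (Fin d → ℝ) → ℝ) (m : Finset (CubeIdx d)) : ℝ :=
  sInf {y : ℝ | ∃ g ∈ VmD d m, y = d2Sq d s g}

def approxPen (d : ℕ) (s : (Fin d → ℝ) → (Fin d → ℝ) → ℝ) (n : ℕ) (m : Finset (CubeIdx d)) : ℝ :=
  approxErr d s m + m.card * Real.log n / n

section Criterion

variable {d : ℕ} {s : (Fin d → ℝ) → (Fin d → ℝ) → ℝ} {m m' : Finset (CubeIdx d)}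

lemma d2Sq_nonneg (g : (Fin d → ℝ) × (Fin d → ℝ) → ℝ) : 0 ≤ d2Sq d s g :=
  integral_nonneg fun _ => sq_nonneg _

lemma approxErr_nonneg : 0 ≤ approxErr d s m :=
  Real.sInf_nonneg fun _ ⟨g, _, hy⟩ => hy ▸ d2Sq_nonneg g

lemma approxErr_le_of_forall (c : ℝ)
    (h : ∀ g ∈ VmD d m, ∃ g' ∈ VmD d m', d2Sq d s g' ≤ d2Sq d s g + c) :
    approxErr d s m' ≤ approxErr d s m + c := by
  have hne : {y : ℝ | ∃ g ∈ VmD d m, y = d2Sq d s g}.Nonempty :=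
    ⟨_, stepFun d m 0, ⟨0, fun _ _ => le_rfl, rfl⟩, rfl⟩
  rw [← sub_le_iff_le_add]
  refine le_csInf hne fun y ⟨g, hg, hy⟩ => ?_
  obtain ⟨g', hg', hle⟩ := h g hg
  have : approxErr d s m' ≤ d2Sq d s g' :=
    csInf_le ⟨0, fun _ ⟨g, _, hy⟩ => hy ▸ d2Sq_nonneg g⟩ ⟨g', hg', rfl⟩
  linarith

lemma exists_mem_Mpart_approxErr_le (hsm : Measurable (Function.uncurry s))
    (hs0 : ∀ x y, 0 ≤ s x y) (hs1 : ∀ x, ∫ y, s x y = 1) (hm : m ∈ MpartInf d) (ℓ : ℕ) :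
    ∃ m' ∈ Mpart d ℓ, m'.card ≤ m.card ∧
      approxErr d s m' ≤ approxErr d s m + m.card * (1 / 2 ^ (ℓ * d)) := by
  obtain ⟨ℓ₀, hm⟩ := mem_iUnion.1 hm
  obtain ⟨m', hm', hcard, hcubes⟩ := IsPartOf.exists_truncate hm ℓ
  refine ⟨m', hm', hcard, approxErr_le_of_forall _ ?_⟩
  rintro _ ⟨a, ha, rfl⟩
  have ha' : ∀ K ∈ m', 0 ≤ if K ∈ m then a K else 0 := fun K _ => by
    split_ifs with hK
    exacts [ha K hK, le_rfl]
  refine ⟨_, ⟨_, ha', rfl⟩,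
    (d2Sq_stepFun_le hsm hs0 hs1 hm.pairwiseDisjoint hm' a).trans (add_le_add le_rfl ?_)⟩
  calc ∑ K ∈ m' \ m, ∫ p in unitSq d, s p.1 p.2 * indC d K p
      ≤ ∑ K ∈ m' \ m, (1 : ℝ) / 2 ^ (ℓ * d) := by
        refine Finset.sum_le_sum fun K hK => ?_
        have hlevel : K.1 = ℓ := by
          have := (hcubes K (Finset.mem_sdiff.1 hK).1).resolve_left (Finset.mem_sdiff.1 hK).2
          simpa [rootC] using this
        simpa [hlevel] using setIntegral_mul_indC_le hsm hs0 hs1 K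
    _ ≤ m.card * (1 / 2 ^ (ℓ * d)) := by
        rw [Finset.sum_const, nsmul_eq_mul]
        have : ((m' \ m).card : ℝ) ≤ m.card := by
          exact_mod_cast (Finset.card_le_card Finset.sdiff_subset).trans hcard
        gcongr

lemma approxPen_nonneg (n : ℕ) : 0 ≤ approxPen d s n m :=
  add_nonneg approxErr_nonneg
    (div_nonneg (mul_nonneg (Nat.cast_nonneg _) (Real.log_natCast_nonneg n)) (Nat.cast_nonneg _))

lemma exists_mem_Mpart_approxPen_le {n ℓ : ℕ}
    (hsm : Measurable (Function.uncurry s)) (hs0 : ∀ x y, 0 ≤ s x y) (hs1 : ∀ x, ∫ y, s x y = 1)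
    (hn : 3 ≤ n) (hℓn : (n : ℝ) ≤ 2 ^ (ℓ * d)) (hm : m ∈ MpartInf d) :
    ∃ m' ∈ Mpart d ℓ, approxPen d s n m' ≤ 2 * approxPen d s n m := by
  obtain ⟨m', hm', hcard, herr⟩ := exists_mem_Mpart_approxErr_le hsm hs0 hs1 hm ℓ
  have hn0 : (0 : ℝ) < n := by positivity
  have hlog : 1 ≤ Real.log n := by
    rw [Real.le_log_iff_exp_le hn0]
    have : (3 : ℝ) ≤ n := by exact_mod_cast hn
    linarith [Real.exp_one_lt_d9]
  have hcell : 1 / 2 ^ (ℓ * d) ≤ Real.log n / n :=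
    (one_div_le_one_div_of_le hn0 hℓn).trans (by gcongr)
  have hcard' : (m'.card : ℝ) ≤ m.card := by exact_mod_cast hcard
  refine ⟨m', hm', ?_⟩
  unfold approxPen
  rw [mul_div_assoc, mul_div_assoc]
  calc approxErr d s m' + m'.card * (Real.log n / n)
      ≤ approxErr d s m + m.card * (1 / 2 ^ (ℓ * d)) + m.card * (Real.log n / n) := by gcongr
    _ ≤ approxErr d s m + m.card * (Real.log n / n) + m.card * (Real.log n / n) := by gcongr
    _ ≤ 2 * (approxErr d s m + m.card * (Real.log n / n)) := by
        linarith [approxErr_nonneg (d := d) (s := s) (m := m)]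

end Criterion

theorem stmt_19_general
    (d : ℕ)
    (n : ℕ) (hn : 3 < n)
    (s : (Fin d → ℝ) → (Fin d → ℝ) → ℝ)
    (hsm : Measurable (Function.uncurry s)) (hs0 : ∀ x y, 0 ≤ s x y)
    (hs1 : ∀ x, ∫ y, s x y = 1)
    (ℓ : ℕ) (hℓn : (n : ℝ) ≤ 2 ^ (ℓ * d)) :
    sInf {x : ℝ | ∃ m ∈ Mpart d ℓ,
        x = sInf {y : ℝ | ∃ g ∈ VmD d m, y = d2Sq d s g} + m.card * Real.log n / n}
      ≤ 4 * sInf {x : ℝ | ∃ m ∈ MpartInf d,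
          x = sInf {y : ℝ | ∃ g ∈ VmD d m, y = d2Sq d s g} + m.card * Real.log n / n} := by
  change sInf {x | ∃ m ∈ Mpart d ℓ, x = approxPen d s n m}
    ≤ 4 * sInf {x | ∃ m ∈ MpartInf d, x = approxPen d s n m}
  have hinf : 0 ≤ sInf {x | ∃ m ∈ MpartInf d, x = approxPen d s n m} :=
    Real.sInf_nonneg fun _ ⟨m, _, hx⟩ => hx ▸ approxPen_nonneg n
  calc _ ≤ 2 * sInf {x | ∃ m ∈ MpartInf d, x = approxPen d s n m} :=
        sInf_le_mul_sInf (fun m _ => approxPen_nonneg n)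
          ⟨{rootC d}, mem_iUnion.2 ⟨0, .leaf 0 _⟩⟩ two_pos fun m hm => exists_mem_Mpart_approxPen_le hsm hs0 hs1 hn.le hℓn hm
    _ ≤ 4 * sInf {x | ∃ m ∈ MpartInf d, x = approxPen d s n m} := by linarith

/-- **Claim 5 of the paper.** If every `X_i`, `i < n`, has a density bounded
by `κ` on `[0,1]^d`, then for every `ℓ` with `2^{ℓd} ≥ n`,
`inf_{m ∈ 𝓜_ℓ} { d₂²(√s|_A, V_m) + |m| log n / n }
  ≤ 4 inf_{m ∈ 𝓜_∞} { d₂²(√s|_A, V_m) + |m| log n / n }`. -/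
theorem stmt_19
    (d : ℕ) (hd : 0 < d)
    {Ω : Type} [MeasurableSpace Ω] (P : Measure Ω) [IsProbabilityMeasure P]
    (n : ℕ) (hn : 3 < n)
    (X : ℕ → Ω → (Fin d → ℝ)) (hX : ∀ i, Measurable (X i))
    (s : (Fin d → ℝ) → (Fin d → ℝ) → ℝ)
    (hsm : Measurable (Function.uncurry s)) (hs0 : ∀ x y, 0 ≤ s x y)
    (hs1 : ∀ x, ∫ y, s x y = 1)
    (hMarkov : ∀ i, i < n → ∀ g : (Fin d → ℝ) → ℝ, Measurable g → (∃ c, ∀ x, |g x| ≤ c) →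
      P[(fun ω => g (X (i + 1) ω)) |
          ⨆ k ∈ Finset.range (i + 1), MeasurableSpace.comap (X k) inferInstance]
        =ᵐ[P] fun ω => ∫ y, g y * s (X i ω) y)
    (κ : ℝ) (hκ : 0 < κ)
    (φ : ℕ → (Fin d → ℝ) → ℝ) (hφ0 : ∀ i, i < n → ∀ x, 0 ≤ φ i x)
    (hφ : ∀ i, i < n →
      Measure.map (X i) P = volume.withDensity fun x => ENNReal.ofReal (φ i x))
    (hφκ : ∀ i, i < n → ∀ x ∈ Set.Icc (0 : Fin d → ℝ) 1, φ i x ≤ κ)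
    (ℓ : ℕ) (hℓ : 1 ≤ ℓ) (hℓn : (n : ℝ) ≤ 2 ^ (ℓ * d)) :
    sInf {x : ℝ | ∃ m ∈ Mpart d ℓ,
        x = sInf {y : ℝ | ∃ g ∈ VmD d m, y = d2Sq d s g} + m.card * Real.log n / n}
      ≤ 4 * sInf {x : ℝ | ∃ m ∈ MpartInf d,
          x = sInf {y : ℝ | ∃ g ∈ VmD d m, y = d2Sq d s g} + m.card * Real.log n / n} :=
  stmt_19_general d n hn s hsm hs0 hs1 ℓ hℓn
end
end
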